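/- arXiv:math/0403088 — 6 statements merged into one kernel-verified Lean document; each statement's English description precedes it below -/
import Mathlib

section
/- Let (E,H) and (E',H') be matrix pencils (pairs of matrices over a field K of sizes (m+n)×(p+q) and m×p respectively). Then there exist matrices E12, E21, E22, H12, H21, H22 such that (E,H) is strictly equivalent to the block pencil ([[E',E12],[E21,E22]], [[H',H12],[H21,H22]]) if and only if the Kronecker representation (E',H') is a subfactor of the Kronecker representation (E,H), i.e., a quotient representation of a subrepresentation of (E,H). -/
open Matrix

/-- A homomorphism of Kronecker representations `(E', H') → (E, H)` is a pair of
matrices `(ψ, φ)` with `E * φ = ψ * E'` and `H * φ = ψ * H'`. A subrepresentation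
is witnessed by an injective such pair. -/
def IsSubrep {K : Type*} [Field K] {a b c d : Type*} [Fintype a] [Fintype b] [Fintype c]
    [Fintype d] (E H : Matrix a b K) (E' H' : Matrix c d K) : Prop :=
  ∃ (ψ : Matrix a c K) (φ : Matrix b d K),
    Function.Injective ψ.mulVecLin ∧ Function.Injective φ.mulVecLin ∧
    E * φ = ψ * E' ∧ H * φ = ψ * H'

/-- `(E', H')` is a quotient (factor) representation of `(E, H)`:
there is a surjective pair `(ψ, φ)` with `E' * φ = ψ * E` and `H' * φ = ψ * H`. -/
def IsQuot {K : Type*} [Field K] {a b c d : Type*} [Fintype a] [Fintype b] [Fintype c]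
    [Fintype d] (E H : Matrix a b K) (E' H' : Matrix c d K) : Prop :=
  ∃ (ψ : Matrix c a K) (φ : Matrix d b K),
    Function.Surjective ψ.mulVecLin ∧ Function.Surjective φ.mulVecLin ∧
    E' * φ = ψ * E ∧ H' * φ = ψ * H

/-- `(E', H')` is a subfactor of `(E, H)`: a quotient of a subrepresentation. -/
def IsSubfactor {K : Type*} [Field K] {a b c d : Type*} [Fintype a] [Fintype b] [Fintype c]
    [Fintype d] (E H : Matrix a b K) (E' H' : Matrix c d K) : Prop :=
  ∃ (k l : ℕ) (E₁ H₁ : Matrix (Fin k) (Fin l) K),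
    IsSubrep E H E₁ H₁ ∧ IsQuot E₁ H₁ E' H'

/-!
If `E = P * fromBlocks E' _ _ _ * Q`, the first rows `π` of `P⁻¹` and the first columns `ι` of
`Q⁻¹` form a surjection and an injection with `π * E * ι = E'` and `π * H * ι = H'`; conversely
such a pair `(π, ι)` can be completed to invertible matrices, by extending a basis. A pair
`(π, ι)` is the same thing as a subfactor: `(E * ι, H * ι)` is a subrepresentation of `(E, H)`
with quotient `(E', H')` via `π`; conversely, from a subrepresentation `(ψ, φ)` with quotient
`(ψ', φ')`, one takes `π = ψ' * ψ₀` and `ι = φ * φ₁`, with `ψ₀` a left inverse of `ψ` and `φ₁` a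
right inverse of `φ'`.
-/

namespace Matrix

section Semiring

variable {R : Type*} [Semiring R]

theorem mul_submatrix_id {l n p q : Type*} [Fintype n] (M : Matrix l n R) (N : Matrix n p R)
    (f : q → p) :
    M * N.submatrix id f = (M * N).submatrix id f :=
  (submatrix_mul M N id id f Function.bijective_id).symm

theorem toBlocks₁₁_mul_mul {l₁ l₂ m n p₁ p₂ : Type*} [Fintype m] [Fintype n]
    (U : Matrix (l₁ ⊕ l₂) m R) (M : Matrix m n R) (V : Matrix n (p₁ ⊕ p₂) R) :
    (U * M * V).toBlocks₁₁ = U.toRows₁ * M * V.toCols₁ := by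
  rw [← fromRows_toRows U, ← fromCols_toCols V, fromRows_mul, fromRows_mul_fromCols,
    toBlocks_fromBlocks₁₁, toRows₁_fromRows, toCols₁_fromCols]

theorem units_inv_mul_mul_mul_inv {m n : Type*} [Fintype m] [Fintype n] [DecidableEq m]
    [DecidableEq n] (P : (Matrix m m R)ˣ) (Q : (Matrix n n R)ˣ) (M : Matrix m n R) :
    (↑P⁻¹ : Matrix m m R) * ((P : Matrix m m R) * M * (Q : Matrix n n R)) * (↑Q⁻¹ : Matrix n n R)
      = M := by
  rw [Matrix.mul_assoc, Matrix.mul_assoc, Units.mul_inv, Matrix.mul_one, ← Matrix.mul_assoc,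
    Units.inv_mul, Matrix.one_mul]

end Semiring

section Field

variable {K : Type*} [Field K] {a b c : Type*} [Fintype a] [Fintype b] [Fintype c]

theorem injective_mulVecLin_iff_exists_mul_eq_one [DecidableEq b] {A : Matrix a b K} :
    Function.Injective A.mulVecLin ↔ ∃ B : Matrix b a K, B * A = 1 := by
  refine ⟨fun h => ?_, fun ⟨B, hB⟩ x y hxy => ?_⟩
  · classical
    obtain ⟨g, hg⟩ := A.mulVecLin.exists_leftInverse_of_injective (LinearMap.ker_eq_bot.2 h)
    refine ⟨LinearMap.toMatrix' g, ?_⟩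
    simpa [LinearMap.toMatrix'_comp, ← toLin'_apply'] using congrArg LinearMap.toMatrix' hg
  · simpa [mulVec_mulVec, hB] using congrArg (B *ᵥ ·) hxy

theorem surjective_mulVecLin_iff_exists_mul_eq_one [DecidableEq a] {A : Matrix a b K} :
    Function.Surjective A.mulVecLin ↔ ∃ B : Matrix b a K, A * B = 1 := by
  rw [coe_mulVecLin]
  exact mulVec_surjective_iff_exists_right_inverse

theorem surjective_mulVecLin_iff_injective_transpose [DecidableEq a] {A : Matrix a b K} :
    Function.Surjective A.mulVecLin ↔ Function.Injective Aᵀ.mulVecLin := by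
  rw [surjective_mulVecLin_iff_exists_mul_eq_one, injective_mulVecLin_iff_exists_mul_eq_one]
  refine ⟨fun ⟨B, hB⟩ => ⟨Bᵀ, ?_⟩, fun ⟨B, hB⟩ => ⟨Bᵀ, ?_⟩⟩
  · rw [← transpose_mul, hB, transpose_one]
  · rw [← transpose_transpose A, ← transpose_mul, hB, transpose_one]

theorem exists_isUnit_fromCols_iff [DecidableEq b] [DecidableEq c] {A : Matrix (b ⊕ c) b K} :
    (∃ B : Matrix (b ⊕ c) c K, IsUnit (fromCols A B)) ↔ Function.Injective A.mulVecLin := by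
  refine ⟨fun ⟨B, hB⟩ x y hxy => ?_, fun hA => ?_⟩
  · have h := mulVec_injective_iff_isUnit.2 hB
      (show fromCols A B *ᵥ Sum.elim x 0 = fromCols A B *ᵥ Sum.elim y 0 by
        simpa [fromCols_mulVec_sumElim] using hxy)
    funext i
    exact congrFun h (Sum.inl i)
  -- complete the columns of `A` by a basis of a complement of its column space
  obtain ⟨C, hC⟩ := (LinearMap.range A.mulVecLin).exists_isCompl
  have hC_rank : Module.finrank K C = Fintype.card c := by
    have := Submodule.finrank_add_eq_of_isCompl hC
    rw [LinearMap.finrank_range_of_inj hA] at this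
    simp only [Module.finrank_fintype_fun_eq_card, Fintype.card_sum] at this
    omega
  let v : Module.Basis c K C :=
    (Module.finBasisOfFinrankEq K C hC_rank).reindex (Fintype.equivFin c).symm
  refine ⟨(of fun j => (v j : b ⊕ c → K))ᵀ, ?_⟩
  have hcols : (fromCols A (of fun j => (v j : b ⊕ c → K))ᵀ).col =
      Sum.elim A.col fun j => (v j : b ⊕ c → K) := by
    funext j; cases j <;> rfl
  rw [← linearIndependent_cols_iff_isUnit, hcols]
  refine (mulVec_injective_iff.1 hA).sum_type
    (v.linearIndependent.map' C.subtype C.ker_subtype) ?_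
  rw [← range_mulVecLin]
  refine hC.disjoint.mono_right (Submodule.span_le.2 ?_)
  rintro _ ⟨j, rfl⟩
  exact (v j).2

theorem exists_isUnit_fromRows_iff [DecidableEq b] [DecidableEq c] {A : Matrix b (b ⊕ c) K} :
    (∃ B : Matrix c (b ⊕ c) K, IsUnit (fromRows A B)) ↔ Function.Surjective A.mulVecLin := by
  rw [surjective_mulVecLin_iff_injective_transpose, ← exists_isUnit_fromCols_iff]
  refine ⟨fun ⟨B, hB⟩ => ⟨Bᵀ, ?_⟩, fun ⟨B, hB⟩ => ⟨Bᵀ, ?_⟩⟩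
  · rwa [← transpose_fromRows, isUnit_transpose]
  · rwa [← transpose_transpose (fromRows A Bᵀ), transpose_fromRows, transpose_transpose,
      isUnit_transpose]

end Field

end Matrix

section Pencil

variable {R : Type*} [Semiring R] {b c d e : Type*} [Fintype b] [Fintype c] [Fintype d]
  [Fintype e] [DecidableEq b] [DecidableEq c] [DecidableEq d] [DecidableEq e]

theorem exists_eq_mul_fromBlocks_mul_iff (E H : Matrix (b ⊕ c) (d ⊕ e) R)
    (E' H' : Matrix b d R) :
    (∃ (E₁₂ : Matrix b e R) (E₂₁ : Matrix c d R) (E₂₂ : Matrix c e R) (H₁₂ : Matrix b e R)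
       (H₂₁ : Matrix c d R) (H₂₂ : Matrix c e R) (P : Matrix (b ⊕ c) (b ⊕ c) R)
       (Q : Matrix (d ⊕ e) (d ⊕ e) R),
        IsUnit P ∧ IsUnit Q ∧ E = P * fromBlocks E' E₁₂ E₂₁ E₂₂ * Q ∧
        H = P * fromBlocks H' H₁₂ H₂₁ H₂₂ * Q) ↔
    ∃ (U : Matrix (b ⊕ c) (b ⊕ c) R) (V : Matrix (d ⊕ e) (d ⊕ e) R),
      IsUnit U ∧ IsUnit V ∧ (U * E * V).toBlocks₁₁ = E' ∧ (U * H * V).toBlocks₁₁ = H' := by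
  constructor
  · rintro ⟨E₁₂, E₂₁, E₂₂, H₁₂, H₂₁, H₂₂, _, _, ⟨P, rfl⟩, ⟨Q, rfl⟩, rfl, rfl⟩
    refine ⟨↑P⁻¹, ↑Q⁻¹, P⁻¹.isUnit, Q⁻¹.isUnit, ?_, ?_⟩ <;>
      rw [units_inv_mul_mul_mul_inv, toBlocks_fromBlocks₁₁]
  · rintro ⟨_, _, ⟨U, rfl⟩, ⟨V, rfl⟩, hE, hH⟩
    set F := (U : Matrix (b ⊕ c) (b ⊕ c) R) * E * (V : Matrix (d ⊕ e) (d ⊕ e) R)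
    set G := (U : Matrix (b ⊕ c) (b ⊕ c) R) * H * (V : Matrix (d ⊕ e) (d ⊕ e) R)
    refine ⟨F.toBlocks₁₂, F.toBlocks₂₁, F.toBlocks₂₂, G.toBlocks₁₂, G.toBlocks₂₁, G.toBlocks₂₂,
      ↑U⁻¹, ↑V⁻¹, U⁻¹.isUnit, V⁻¹.isUnit, ?_, ?_⟩
    · rw [← hE, fromBlocks_toBlocks]
      exact (units_inv_mul_mul_mul_inv U V E).symm
    · rw [← hH, fromBlocks_toBlocks]
      exact (units_inv_mul_mul_mul_inv U V H).symm

end Pencil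

section Kronecker

variable {K : Type*} [Field K] {a b c d m n : Type*} [Fintype a] [Fintype b] [Fintype c]
  [Fintype d] [Fintype m] [Fintype n]

/-- `(E', H')` is cut out of `(E, H)` by restricting to a subspace of the domain and projecting
onto a quotient of the codomain. -/
def IsCompression (E H : Matrix a b K) (E' H' : Matrix c d K) : Prop :=
  ∃ (π : Matrix c a K) (ι : Matrix b d K),
    Function.Surjective π.mulVecLin ∧ Function.Injective ι.mulVecLin ∧
    π * E * ι = E' ∧ π * H * ι = H'

theorem IsSubrep.submatrix {m' n' : Type*} [Fintype m'] [Fintype n'] {E H : Matrix a b K}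
    {E₁ H₁ : Matrix m n K} (h : IsSubrep E H E₁ H₁) (e : m' ≃ m) (f : n' ≃ n) :
    IsSubrep E H (E₁.submatrix e f) (H₁.submatrix e f) := by
  classical
  obtain ⟨ψ, φ, hψ, hφ, hE, hH⟩ := h
  obtain ⟨ψ₀, hψ₀⟩ := injective_mulVecLin_iff_exists_mul_eq_one.1 hψ
  obtain ⟨φ₀, hφ₀⟩ := injective_mulVecLin_iff_exists_mul_eq_one.1 hφ
  refine ⟨ψ.submatrix id e, φ.submatrix id f,
    injective_mulVecLin_iff_exists_mul_eq_one.2 ⟨ψ₀.submatrix e id, ?_⟩,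
    injective_mulVecLin_iff_exists_mul_eq_one.2 ⟨φ₀.submatrix f id, ?_⟩, ?_, ?_⟩
  · rw [← submatrix_mul _ _ _ _ _ Function.bijective_id, hψ₀, submatrix_one_equiv]
  · rw [← submatrix_mul _ _ _ _ _ Function.bijective_id, hφ₀, submatrix_one_equiv]
  · rw [submatrix_mul_equiv, mul_submatrix_id, hE]
  · rw [submatrix_mul_equiv, mul_submatrix_id, hH]

theorem IsQuot.submatrix {m' n' : Type*} [Fintype m'] [Fintype n'] {E₁ H₁ : Matrix m n K}
    {E' H' : Matrix c d K} (h : IsQuot E₁ H₁ E' H') (e : m' ≃ m) (f : n' ≃ n) :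
    IsQuot (E₁.submatrix e f) (H₁.submatrix e f) E' H' := by
  classical
  obtain ⟨ψ, φ, hψ, hφ, hE, hH⟩ := h
  obtain ⟨ψ₀, hψ₀⟩ := surjective_mulVecLin_iff_exists_mul_eq_one.1 hψ
  obtain ⟨φ₀, hφ₀⟩ := surjective_mulVecLin_iff_exists_mul_eq_one.1 hφ
  refine ⟨ψ.submatrix id e, φ.submatrix id f,
    surjective_mulVecLin_iff_exists_mul_eq_one.2 ⟨ψ₀.submatrix e id, ?_⟩,
    surjective_mulVecLin_iff_exists_mul_eq_one.2 ⟨φ₀.submatrix f id, ?_⟩, ?_, ?_⟩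
  · rw [submatrix_mul_equiv, hψ₀, submatrix_id_id]
  · rw [submatrix_mul_equiv, hφ₀, submatrix_id_id]
  · rw [submatrix_mul_equiv, mul_submatrix_id, hE]
  · rw [submatrix_mul_equiv, mul_submatrix_id, hH]

theorem IsSubrep.isSubfactor {E H : Matrix a b K} {E₁ H₁ : Matrix m n K} {E' H' : Matrix c d K}
    (h₁ : IsSubrep E H E₁ H₁) (h₂ : IsQuot E₁ H₁ E' H') : IsSubfactor E H E' H' :=
  ⟨_, _, _, _, h₁.submatrix (Fintype.equivFin m).symm (Fintype.equivFin n).symm,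
    h₂.submatrix (Fintype.equivFin m).symm (Fintype.equivFin n).symm⟩

theorem IsSubrep.isCompression {E H : Matrix a b K} {E₁ H₁ : Matrix m n K}
    {E' H' : Matrix c d K} (h₁ : IsSubrep E H E₁ H₁) (h₂ : IsQuot E₁ H₁ E' H') :
    IsCompression E H E' H' := by
  classical
  obtain ⟨ψ, φ, hψ, hφ, hE, hH⟩ := h₁
  obtain ⟨ψ', φ', hψ', hφ', hE', hH'⟩ := h₂
  obtain ⟨ψ₀, hψ₀⟩ := injective_mulVecLin_iff_exists_mul_eq_one.1 hψ
  obtain ⟨φ₀, hφ₀⟩ := injective_mulVecLin_iff_exists_mul_eq_one.1 hφ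
  obtain ⟨ψ₁, hψ₁⟩ := surjective_mulVecLin_iff_exists_mul_eq_one.1 hψ'
  obtain ⟨φ₁, hφ₁⟩ := surjective_mulVecLin_iff_exists_mul_eq_one.1 hφ'
  have compress_eq {X : Matrix a b K} {X₁ : Matrix m n K} {X' : Matrix c d K}
      (h : X * φ = ψ * X₁) (h' : X' * φ' = ψ' * X₁) : ψ' * ψ₀ * X * (φ * φ₁) = X' :=
    calc ψ' * ψ₀ * X * (φ * φ₁) = ψ' * (ψ₀ * ψ) * X₁ * φ₁ := by
          simp only [Matrix.mul_assoc]
          rw [← Matrix.mul_assoc X, h]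
          simp only [Matrix.mul_assoc]
      _ = X' * φ' * φ₁ := by rw [hψ₀, Matrix.mul_one, h']
      _ = X' := by rw [Matrix.mul_assoc, hφ₁, Matrix.mul_one]
  refine ⟨ψ' * ψ₀, φ * φ₁,
    surjective_mulVecLin_iff_exists_mul_eq_one.2 ⟨ψ * ψ₁, ?_⟩,
    injective_mulVecLin_iff_exists_mul_eq_one.2 ⟨φ' * φ₀, ?_⟩,
    compress_eq hE hE', compress_eq hH hH'⟩
  · rw [Matrix.mul_assoc, ← Matrix.mul_assoc ψ₀, hψ₀, Matrix.one_mul, hψ₁]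
  · rw [Matrix.mul_assoc, ← Matrix.mul_assoc φ₀, hφ₀, Matrix.one_mul, hφ₁]

theorem isCompression_iff_isSubfactor {E H : Matrix a b K} {E' H' : Matrix c d K} :
    IsCompression E H E' H' ↔ IsSubfactor E H E' H' := by
  classical
  refine ⟨fun ⟨π, ι, hπ, hι, hE, hH⟩ => ?_, fun ⟨_, _, _, _, h₁, h₂⟩ => h₁.isCompression h₂⟩
  have h₁ : IsSubrep E H (E * ι) (H * ι) :=
    ⟨1, ι, by simpa only [mulVecLin_one, LinearMap.id_coe] using Function.injective_id, hι,
      (Matrix.one_mul _).symm, (Matrix.one_mul _).symm⟩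
  have h₂ : IsQuot (E * ι) (H * ι) E' H' :=
    ⟨π, 1, hπ, by simpa only [mulVecLin_one, LinearMap.id_coe] using Function.surjective_id,
      by rw [Matrix.mul_one, ← hE, Matrix.mul_assoc],
      by rw [Matrix.mul_one, ← hH, Matrix.mul_assoc]⟩
  exact h₁.isSubfactor h₂

theorem isCompression_iff_exists_toBlocks₁₁ {b c d e : Type*} [Fintype b] [Fintype c]
    [Fintype d] [Fintype e] [DecidableEq b] [DecidableEq c] [DecidableEq d] [DecidableEq e]
    {E H : Matrix (b ⊕ c) (d ⊕ e) K} {E' H' : Matrix b d K} :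
    IsCompression E H E' H' ↔
      ∃ (U : Matrix (b ⊕ c) (b ⊕ c) K) (V : Matrix (d ⊕ e) (d ⊕ e) K),
        IsUnit U ∧ IsUnit V ∧ (U * E * V).toBlocks₁₁ = E' ∧ (U * H * V).toBlocks₁₁ = H' := by
  simp_rw [toBlocks₁₁_mul_mul]
  constructor
  · rintro ⟨π, ι, hπ, hι, hE, hH⟩
    obtain ⟨T, hT⟩ := exists_isUnit_fromRows_iff.2 hπ
    obtain ⟨S, hS⟩ := exists_isUnit_fromCols_iff.2 hι
    exact ⟨fromRows π T, fromCols ι S, hT, hS, by rwa [toRows₁_fromRows, toCols₁_fromCols],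
      by rwa [toRows₁_fromRows, toCols₁_fromCols]⟩
  · rintro ⟨U, V, hU, hV, hE, hH⟩
    refine ⟨U.toRows₁, V.toCols₁, exists_isUnit_fromRows_iff.1 ⟨U.toRows₂, ?_⟩,
      exists_isUnit_fromCols_iff.1 ⟨V.toCols₂, ?_⟩, hE, hH⟩
    · rwa [fromRows_toRows]
    · rwa [fromCols_toCols]

end Kronecker

/-- `(E,H)` is strictly equivalent to a block pencil with top-left block
`(E',H')` iff `(E',H')` is a subfactor of `(E,H)`. -/
theorem strict_equiv_block_iff_subfactor {K : Type*} [Field K] {m n p q : ℕ}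
    (E H : Matrix (Fin m ⊕ Fin n) (Fin p ⊕ Fin q) K) (E' H' : Matrix (Fin m) (Fin p) K) :
    (∃ (E₁₂ : Matrix (Fin m) (Fin q) K) (E₂₁ : Matrix (Fin n) (Fin p) K)
       (E₂₂ : Matrix (Fin n) (Fin q) K) (H₁₂ : Matrix (Fin m) (Fin q) K)
       (H₂₁ : Matrix (Fin n) (Fin p) K) (H₂₂ : Matrix (Fin n) (Fin q) K)
       (P : Matrix (Fin m ⊕ Fin n) (Fin m ⊕ Fin n) K)
       (Q : Matrix (Fin p ⊕ Fin q) (Fin p ⊕ Fin q) K),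
        IsUnit P ∧ IsUnit Q ∧
        E = P * Matrix.fromBlocks E' E₁₂ E₂₁ E₂₂ * Q ∧
        H = P * Matrix.fromBlocks H' H₁₂ H₂₁ H₂₂ * Q) ↔
    IsSubfactor E H E' H' := by
  rw [exists_eq_mul_fromBlocks_mul_iff, ← isCompression_iff_exists_toBlocks₁₁,
    isCompression_iff_isSubfactor]
end

section
/- Let (E,H) and (E',H') be pairs of real matrices of sizes a×b and c×d respectively. If there exist injective complex-linear maps φ: ℂ^d → ℂ^b and ψ: ℂ^c → ℂ^a with Eφ = ψE' and Hφ = ψH' (i.e., (E',H') is a subrepresentation of (E,H) over ℂ), then there exist injective real-linear maps φ': ℝ^d → ℝ^b and ψ': ℝ^c → ℝ^a with Eφ' = ψ'E' and Hφ' = ψ'H'. -/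
open Matrix
open Polynomial

lemma exists_left_inv {m n : ℕ} {K : Type*} [Field K] (M : Matrix (Fin m) (Fin n) K)
    (h : Function.Injective M.mulVecLin) : ∃ B : Matrix (Fin n) (Fin m) K, B * M = 1 := by
  obtain ⟨g, hg⟩ := (Matrix.toLin' M).exists_leftInverse_of_injective
    (by rw [LinearMap.ker_eq_bot, Matrix.toLin'_apply']; exact h)
  refine ⟨LinearMap.toMatrix' g, ?_⟩
  have := LinearMap.toMatrix'_comp g (Matrix.toLin' M)
  rw [hg] at this
  simpa [LinearMap.toMatrix'_toLin'] using this.symm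

lemma map_mulVec_ofReal {m n : ℕ} (M : Matrix (Fin m) (Fin n) ℝ) (v : Fin n → ℝ) :
    (M.map (fun x : ℝ => (x : ℂ))).mulVec (fun i => (v i : ℂ)) =
      fun i => ((M.mulVec v) i : ℂ) := by
  funext i
  simp [Matrix.mulVec, dotProduct, Matrix.map_apply]

lemma inj_of_left_det {m n : ℕ} (M : Matrix (Fin m) (Fin n) ℝ)
    (B : Matrix (Fin n) (Fin m) ℂ)
    (h : (B * M.map (fun x : ℝ => (x : ℂ))).det ≠ 0) :
    Function.Injective M.mulVecLin := by
  rw [← LinearMap.ker_eq_bot, LinearMap.ker_eq_bot']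
  intro v hv
  have hv' : M.mulVec v = 0 := hv
  have h1 : (B * M.map (fun x : ℝ => (x : ℂ))).mulVec (fun i => (v i : ℂ)) = 0 := by
    rw [← Matrix.mulVec_mulVec, map_mulVec_ofReal, hv']
    have : (fun i : Fin m => ((0 : Fin m → ℝ) i : ℂ)) = (0 : Fin m → ℂ) := by funext i; simp
    rw [this, Matrix.mulVec_zero]
  have hinj : Function.Injective (B * M.map (fun x : ℝ => (x : ℂ))).mulVec :=
    Matrix.mulVec_injective_iff_isUnit.2
      ((Matrix.isUnit_iff_isUnit_det _).2 (isUnit_iff_ne_zero.2 h))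
  have h2 : (fun i => (v i : ℂ)) = (0 : Fin n → ℂ) := by
    apply hinj; rw [h1]; simp
  funext i
  have := congrFun h2 i
  simp only [Pi.zero_apply, Complex.ofReal_eq_zero] at this
  simpa using this

/-- if a pair of real matrix pencils admits an injective complex
intertwining pair, then it admits an injective real intertwining pair: the
subrepresentation relation for real Kronecker representations descends from ℂ to ℝ. -/
theorem subrep_descends_to_real {a b c d : ℕ}
    (E H : Matrix (Fin a) (Fin b) ℝ) (E' H' : Matrix (Fin c) (Fin d) ℝ)
    (φ : Matrix (Fin b) (Fin d) ℂ) (ψ : Matrix (Fin a) (Fin c) ℂ)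
    (hφ : Function.Injective φ.mulVecLin) (hψ : Function.Injective ψ.mulVecLin)
    (hE : (E.map (fun x : ℝ => (x : ℂ))) * φ = ψ * (E'.map (fun x : ℝ => (x : ℂ))))
    (hH : (H.map (fun x : ℝ => (x : ℂ))) * φ = ψ * (H'.map (fun x : ℝ => (x : ℂ)))) :
    ∃ (φ' : Matrix (Fin b) (Fin d) ℝ) (ψ' : Matrix (Fin a) (Fin c) ℝ),
      Function.Injective φ'.mulVecLin ∧ Function.Injective ψ'.mulVecLin ∧
      E * φ' = ψ' * E' ∧ H * φ' = ψ' * H' := by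
  classical
  set oc : ℝ → ℂ := fun x => (x : ℂ) with hoc
  -- real and imaginary parts
  set φr : Matrix (Fin b) (Fin d) ℝ := φ.map Complex.re with hφr
  set φi : Matrix (Fin b) (Fin d) ℝ := φ.map Complex.im with hφi
  set ψr : Matrix (Fin a) (Fin c) ℝ := ψ.map Complex.re with hψr
  set ψi : Matrix (Fin a) (Fin c) ℝ := ψ.map Complex.im with hψi
  have hdecφ : ∀ (z : ℂ), φr.map oc + z • φi.map oc =
      φ.map (fun w => (w.re : ℂ) + z * w.im) := by
    intro z; ext i j
    simp [Matrix.map_apply, Matrix.add_apply, Matrix.smul_apply, smul_eq_mul, hφr, hφi, hoc]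
  have hdecψ : ∀ (z : ℂ), ψr.map oc + z • ψi.map oc =
      ψ.map (fun w => (w.re : ℂ) + z * w.im) := by
    intro z; ext i j
    simp [Matrix.map_apply, Matrix.add_apply, Matrix.smul_apply, smul_eq_mul, hψr, hψi, hoc]
  have hφdec : φr.map oc + Complex.I • φi.map oc = φ := by
    rw [hdecφ]; ext i j
    simp only [Matrix.map_apply]
    rw [mul_comm]; exact Complex.re_add_im _
  have hψdec : ψr.map oc + Complex.I • ψi.map oc = ψ := by
    rw [hdecψ]; ext i j
    simp only [Matrix.map_apply]
    rw [mul_comm]; exact Complex.re_add_im _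
  -- real/imaginary parts of the intertwining relations
  have split : ∀ (A : Matrix (Fin a) (Fin b) ℝ) (A' : Matrix (Fin c) (Fin d) ℝ),
      (A.map oc) * φ = ψ * (A'.map oc) →
      A * φr = ψr * A' ∧ A * φi = ψi * A' := by
    intro A A' hA
    constructor <;> ext i j
    · have h := congrArg (fun M => (M i j).re) hA
      simpa [Matrix.mul_apply, Matrix.map_apply, Complex.re_sum, Complex.mul_re,
        hφr, hψr, hoc] using h
    · have h := congrArg (fun M => (M i j).im) hA
      simpa [Matrix.mul_apply, Matrix.map_apply, Complex.im_sum, Complex.mul_im,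
        hφi, hψi, hoc] using h
  obtain ⟨hEr, hEi⟩ := split E E' hE
  obtain ⟨hHr, hHi⟩ := split H H' hH
  -- left inverses over ℂ
  obtain ⟨Bφ, hBφ⟩ := exists_left_inv φ hφ
  obtain ⟨Bψ, hBψ⟩ := exists_left_inv ψ hψ
  -- polynomial
  set Pφ : Matrix (Fin d) (Fin d) ℂ[X] :=
    (Bφ.map C) * ((φr.map (fun x => C (oc x))) + (X : ℂ[X]) • (φi.map (fun x => C (oc x)))) with hPφ
  set Pψ : Matrix (Fin c) (Fin c) ℂ[X] :=
    (Bψ.map C) * ((ψr.map (fun x => C (oc x))) + (X : ℂ[X]) • (ψi.map (fun x => C (oc x)))) with hPψ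
  set p : ℂ[X] := Pφ.det * Pψ.det with hp
  have heval : ∀ z : ℂ, p.eval z =
      (Bφ * (φr.map oc + z • φi.map oc)).det * (Bψ * (ψr.map oc + z • ψi.map oc)).det := by
    intro z
    have key : ∀ {m n : ℕ} (B : Matrix (Fin m) (Fin n) ℂ) (Ar Ai : Matrix (Fin n) (Fin m) ℝ),
        ((B.map C) * ((Ar.map (fun x => C (oc x))) + (X : ℂ[X]) • (Ai.map (fun x => C (oc x))))).map
          (eval z) = B * (Ar.map oc + z • Ai.map oc) := by
      intro m n B Ar Ai
      ext i j
      simp [Matrix.mul_apply, Matrix.map_apply, Matrix.add_apply, Matrix.smul_apply,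
        eval_finset_sum, smul_eq_mul, mul_add]
      exact Finset.sum_congr rfl fun k _ => by ring
    have h1 : p.eval z = ((Polynomial.evalRingHom z) Pφ.det) * ((Polynomial.evalRingHom z) Pψ.det) := by
      simp [hp]
    rw [h1, RingHom.map_det, RingHom.map_det]
    congr 1
    · congr 1; exact key Bφ φr φi
    · congr 1; exact key Bψ ψr ψi
  have hpI : p.eval Complex.I = 1 := by
    rw [heval, hφdec, hψdec, hBφ, hBψ]
    simp
  have hpne : p ≠ 0 := fun h => by simp [h] at hpI
  -- find a real non-root
  have hfin := Polynomial.finite_setOf_isRoot hpne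
  have hinf : (Set.range oc).Infinite :=
    Set.infinite_range_of_injective Complex.ofReal_injective
  obtain ⟨z, hzr, hznr⟩ := (hinf.diff hfin).nonempty
  obtain ⟨t, rfl⟩ := hzr
  have hevalt : p.eval (oc t) ≠ 0 := fun h => hznr h
  rw [heval] at hevalt
  -- the real intertwiners
  refine ⟨φr + t • φi, ψr + t • ψi, ?_, ?_, ?_, ?_⟩
  · apply inj_of_left_det _ Bφ
    have hmap : (φr + t • φi).map oc = φr.map oc + (oc t) • φi.map oc := by
      ext i j
      simp [Matrix.map_apply, Matrix.add_apply, Matrix.smul_apply, hoc]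
    rw [hmap]
    exact left_ne_zero_of_mul hevalt
  · apply inj_of_left_det _ Bψ
    have hmap : (ψr + t • ψi).map oc = ψr.map oc + (oc t) • ψi.map oc := by
      ext i j
      simp [Matrix.map_apply, Matrix.add_apply, Matrix.smul_apply, hoc]
    rw [hmap]
    exact right_ne_zero_of_mul hevalt
  · rw [Matrix.mul_add, Matrix.add_mul, Matrix.mul_smul, Matrix.smul_mul, hEr, hEi]
  · rw [Matrix.mul_add, Matrix.add_mul, Matrix.mul_smul, Matrix.smul_mul, hHr, hHi]
end

section
/- Let P and Q be complex matrices of full column rank, written P = P1 + iP2 and Q = Q1 + iQ2 with real matrices Pj, Qj. Then there exists a real number x0 such that both P1 + x0·P2 and Q1 + x0·Q2 have full column rank. -/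
open Matrix Polynomial Function


lemma map_mulVec' {m n : ℕ} (M : Matrix (Fin m) (Fin n) ℝ) (v : Fin n → ℝ) :
    (M.map (fun x : ℝ => (x : ℂ))).mulVec (fun j => (v j : ℂ))
      = fun i => ((M.mulVec v i : ℝ) : ℂ) := by
  funext i
  simp [Matrix.mulVec, dotProduct]

lemma aux_poly {m n : ℕ} (M : Matrix (Fin m) (Fin n) ℂ) (M₁ M₂ : Matrix (Fin m) (Fin n) ℝ)
    (hM : M = M₁.map (fun x : ℝ => (x : ℂ)) + Complex.I • M₂.map (fun x : ℝ => (x : ℂ)))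
    (h : Function.Injective M.mulVecLin) :
    ∃ p : Polynomial ℂ, p ≠ 0 ∧
      ∀ x : ℝ, ¬ p.IsRoot (x : ℂ) → Function.Injective (M₁ + x • M₂).mulVecLin := by
  obtain ⟨g, hg⟩ := LinearMap.exists_leftInverse_of_injective M.mulVecLin
    (LinearMap.ker_eq_bot.mpr h)
  set B := LinearMap.toMatrix' g with hB
  have hML : Matrix.toLin' M = M.mulVecLin := by
    ext v i; simp [Matrix.mulVecLin_apply, Matrix.toLin'_apply]
  have hBM : B * M = 1 := by
    apply Matrix.toLin'.injective
    rw [Matrix.toLin'_mul, hB, Matrix.toLin'_toMatrix', hML, hg, Matrix.toLin'_one]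
  set N₁ := B * M₁.map (fun x : ℝ => (x : ℂ)) with hN₁
  set N₂ := B * M₂.map (fun x : ℝ => (x : ℂ)) with hN₂
  set p := (N₁.map Polynomial.C + (Polynomial.X : Polynomial ℂ) • N₂.map Polynomial.C).det with hp
  have heval : ∀ z : ℂ, p.eval z = (N₁ + z • N₂).det := by
    intro z
    have h1 : p.eval z
        = ((Polynomial.evalRingHom z).mapMatrix (N₁.map C + (X : Polynomial ℂ) • N₂.map C)).det := by
      rw [hp]; exact (Polynomial.evalRingHom z).map_det _
    rw [h1]
    congr 1
    ext i j
    simp [Matrix.map_apply, Matrix.add_apply, Matrix.smul_apply, smul_eq_mul, mul_comm z]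
  have hpi : p.eval Complex.I = 1 := by
    rw [heval]
    have : N₁ + Complex.I • N₂ = B * M := by
      rw [hM, hN₁, hN₂, Matrix.mul_add, Matrix.mul_smul]
    rw [this, hBM, Matrix.det_one]
  refine ⟨p, fun h0 => by simp [h0] at hpi, fun x hx => ?_⟩
  have hdet : (N₁ + (x : ℂ) • N₂).det ≠ 0 := by
    rw [← heval]; exact hx
  haveI := (N₁ + (x : ℂ) • N₂).invertibleOfIsUnitDet (Ne.isUnit hdet)
  have hSinj := Matrix.mulVec_injective_of_invertible (N₁ + (x : ℂ) • N₂)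
  rw [injective_iff_map_eq_zero]
  intro v hv
  have hv' : ((M₁ + x • M₂).map (fun t : ℝ => (t : ℂ))).mulVec (fun j => (v j : ℂ)) = 0 := by
    rw [map_mulVec']
    funext i
    have h2 := congrFun hv i
    simp only [Matrix.mulVecLin_apply, Pi.zero_apply] at h2
    simp [h2]
  have hmap : (M₁ + x • M₂).map (fun t : ℝ => (t : ℂ))
      = M₁.map (fun t : ℝ => (t : ℂ)) + (x : ℂ) • M₂.map (fun t : ℝ => (t : ℂ)) := by
    ext i j; simp
  have hS : (N₁ + (x : ℂ) • N₂).mulVec (fun j => (v j : ℂ)) = 0 := by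
    rw [hN₁, hN₂, ← Matrix.mul_smul, ← Matrix.mul_add, ← hmap, ← Matrix.mulVec_mulVec, hv',
      Matrix.mulVec_zero]
  have hz : (fun j => (v j : ℂ)) = (0 : Fin n → ℂ) := by
    apply hSinj; rw [hS, Matrix.mulVec_zero]
  funext j
  simpa using congrFun hz j

/-- if complex matrices `P = P₁ + i P₂` and `Q = Q₁ + i Q₂` (real parts
`Pⱼ, Qⱼ`) have full column rank, then for some real `x₀` both `P₁ + x₀ P₂` and
`Q₁ + x₀ Q₂` have full column rank. -/
theorem exists_real_specialization_full_column_rank {a b c d : ℕ}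
    (P : Matrix (Fin a) (Fin b) ℂ) (Q : Matrix (Fin c) (Fin d) ℂ)
    (P₁ P₂ : Matrix (Fin a) (Fin b) ℝ) (Q₁ Q₂ : Matrix (Fin c) (Fin d) ℝ)
    (hP : P = P₁.map (fun x : ℝ => (x : ℂ)) + Complex.I • P₂.map (fun x : ℝ => (x : ℂ)))
    (hQ : Q = Q₁.map (fun x : ℝ => (x : ℂ)) + Complex.I • Q₂.map (fun x : ℝ => (x : ℂ)))
    (hPrank : Function.Injective P.mulVecLin)
    (hQrank : Function.Injective Q.mulVecLin) :
    ∃ x₀ : ℝ, Function.Injective (P₁ + x₀ • P₂).mulVecLin ∧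
      Function.Injective (Q₁ + x₀ • Q₂).mulVecLin := by
  obtain ⟨p, hp0, hpgood⟩ := aux_poly P P₁ P₂ hP hPrank
  obtain ⟨q, hq0, hqgood⟩ := aux_poly Q Q₁ Q₂ hQ hQrank
  have hfin : ({x : ℝ | p.IsRoot (x : ℂ)} ∪ {x : ℝ | q.IsRoot (x : ℂ)}).Finite := by
    apply Set.Finite.union
    · exact Set.Finite.preimage (Set.injOn_of_injective Complex.ofReal_injective)
        (Polynomial.finite_setOf_isRoot hp0)
    · exact Set.Finite.preimage (Set.injOn_of_injective Complex.ofReal_injective)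
        (Polynomial.finite_setOf_isRoot hq0)
  obtain ⟨x₀, hx₀⟩ := (hfin.infinite_compl).nonempty
  simp only [Set.mem_compl_iff, Set.mem_union, Set.mem_setOf_eq, not_or] at hx₀
  exact ⟨x₀, hpgood x₀ hx₀.1, hqgood x₀ hx₀.2⟩
end

section
/- Let A be an n×n' block upper triangular matrix over the field of rational functions K(x_1,...,x_N), partitioned into q×q blocks with block A_{ij} of size r_i × c_j, such that A_{ij} = 0 for i > j and the entries of the blocks A_{ij} for i ≤ j are pairwise distinct indeterminates. Then rank A = min over 0 ≤ i ≤ q of ( r_1 + ... + r_i + c_{i+1} + ... + c_q ). -/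
open Matrix

noncomputable def genBlockUpperTri (K : Type*) [Field K] (q : ℕ) (r c : ℕ → ℕ) :
    Matrix (Σ i : Fin q, Fin (r i.1)) (Σ j : Fin q, Fin (c j.1))
      (FractionRing (MvPolynomial ((Σ i : Fin q, Fin (r i.1)) × (Σ j : Fin q, Fin (c j.1))) K)) :=
  fun x y =>
    if x.1 ≤ y.1 then
      algebraMap (MvPolynomial ((Σ i : Fin q, Fin (r i.1)) × (Σ j : Fin q, Fin (c j.1))) K) _
        (MvPolynomial.X (x, y))
    else 0

namespace RankGenAux

variable {q : ℕ}

/-- Flattened index of an element of a sigma of `Fin`s, ordered by block. -/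
def sigIdx (d : ℕ → ℕ) (x : Σ i : Fin q, Fin (d i.1)) : ℕ :=
  (∑ j ∈ Finset.range x.1.1, d j) + x.2.1

lemma sigIdx_lt (d : ℕ → ℕ) (x : Σ i : Fin q, Fin (d i.1)) :
    sigIdx d x < ∑ j ∈ Finset.range q, d j := by
  have h1 : sigIdx d x < ∑ j ∈ Finset.range (x.1.1 + 1), d j := by
    rw [Finset.sum_range_succ, sigIdx]
    exact Nat.add_lt_add_left x.2.2 _
  exact h1.trans_le (Finset.sum_le_sum_of_subset (Finset.range_subset_range.2 x.1.2))

lemma sigIdx_lt_of_fst_lt (d : ℕ → ℕ) {x y : Σ i : Fin q, Fin (d i.1)}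
    (h : x.1.1 < y.1.1) : sigIdx d x < sigIdx d y := by
  have h1 : sigIdx d x < ∑ j ∈ Finset.range (x.1.1 + 1), d j := by
    rw [Finset.sum_range_succ, sigIdx]
    exact Nat.add_lt_add_left x.2.2 _
  have h2 : (∑ j ∈ Finset.range (x.1.1 + 1), d j) ≤ ∑ j ∈ Finset.range y.1.1, d j :=
    Finset.sum_le_sum_of_subset (Finset.range_subset_range.2 h)
  exact lt_of_lt_of_le h1 (h2.trans (Nat.le_add_right _ _))

lemma sigIdx_injective (d : ℕ → ℕ) :
    Function.Injective (sigIdx d : (Σ i : Fin q, Fin (d i.1)) → ℕ) := by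
  rintro ⟨i, a⟩ ⟨j, b⟩ h
  have hij : i = j := by
    by_contra hne
    rcases Nat.lt_or_ge i.1 j.1 with hlt | hge
    · exact absurd h (sigIdx_lt_of_fst_lt d hlt).ne
    · rcases Nat.lt_or_ge j.1 i.1 with hlt' | hge'
      · exact absurd h.symm (sigIdx_lt_of_fst_lt d hlt').ne
      · exact hne (Fin.ext (le_antisymm hge' hge))
  subst hij
  simp only [sigIdx] at h
  exact congrArg (Sigma.mk i) (Fin.ext (by omega))

noncomputable def sigEquiv (q : ℕ) (d : ℕ → ℕ) :
    (Σ i : Fin q, Fin (d i.1)) ≃ Fin (∑ j ∈ Finset.range q, d j) :=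
  Equiv.ofBijective (fun x => ⟨sigIdx d x, sigIdx_lt d x⟩)
    ((Fintype.bijective_iff_injective_and_card _).2
      ⟨fun x y h => sigIdx_injective d (congrArg Fin.val h), by
        simp [Fintype.card_sigma, Fin.sum_univ_eq_sum_range fun j => d j]⟩)

lemma sigEquiv_symm_spec (q : ℕ) (d : ℕ → ℕ) (u : Fin (∑ j ∈ Finset.range q, d j)) :
    sigIdx d ((sigEquiv q d).symm u) = u.1 :=
  congrArg Fin.val ((sigEquiv q d).apply_symm_apply u)

lemma prod_monomial {ι σ' R : Type*} [CommSemiring R] (s : Finset ι) (d : ι → (σ' →₀ ℕ))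
    (a : ι → R) :
    ∏ i ∈ s, (MvPolynomial.monomial (d i)) (a i)
      = (MvPolynomial.monomial (∑ i ∈ s, d i)) (∏ i ∈ s, a i) := by
  classical
  induction s using Finset.cons_induction with
  | empty => simp [MvPolynomial.monomial_zero']
  | cons i s hi ih =>
      rw [Finset.prod_cons, Finset.sum_cons, Finset.prod_cons, ih, MvPolynomial.monomial_mul]

lemma card_sigma_subtype (q : ℕ) (d : ℕ → ℕ) (p : ℕ → Prop) [DecidablePred p] :
    Fintype.card {x : Σ j : Fin q, Fin (d j.1) // p x.1.1} =
      ∑ j ∈ Finset.range q, if p j then d j else 0 := by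
  classical
  rw [Fintype.card_subtype, Finset.card_filter, ← Finset.univ_sigma_univ, Finset.sum_sigma,
    ← Fin.sum_univ_eq_sum_range (fun j => if p j then d j else 0)]
  refine Finset.sum_congr rfl fun j _ => ?_
  by_cases hp : p j.1 <;> simp [hp]

lemma matrix_rank_add_le {m n R : Type*} [Fintype m] [Fintype n] [Field R]
    (A B : Matrix m n R) : (A + B).rank ≤ A.rank + B.rank := by
  classical
  rw [Matrix.rank, Matrix.rank, Matrix.rank, Matrix.mulVecLin_add]
  refine le_trans (Submodule.finrank_mono ?_)
    (Submodule.finrank_add_le_finrank_add_finrank _ _)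
  rintro x ⟨v, rfl⟩
  exact Submodule.add_mem_sup (LinearMap.mem_range_self _ v) (LinearMap.mem_range_self _ v)

lemma sum_ite_range_le (q i : ℕ) (d : ℕ → ℕ) :
    (∑ j ∈ Finset.range q, if i ≤ j then d j else 0) = ∑ j ∈ Finset.Ico i q, d j := by
  rw [← Finset.sum_filter]
  congr 1
  ext j
  simp only [Finset.mem_filter, Finset.mem_range, Finset.mem_Ico]
  omega

lemma sum_ite_range_lt {q i : ℕ} (hi : i ≤ q) (d : ℕ → ℕ) :
    (∑ j ∈ Finset.range q, if j < i then d j else 0) = ∑ j ∈ Finset.range i, d j := by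
  rw [← Finset.sum_filter]
  congr 1
  ext j
  simp only [Finset.mem_filter, Finset.mem_range]
  omega

end RankGenAux

set_option maxHeartbeats 2000000 in
/-- Proposition 3: the rank of a generic block upper triangular matrix is
`min over 0 ≤ i ≤ q of (r₁ + ⋯ + rᵢ + c_{i+1} + ⋯ + c_q)`. -/
theorem rank_genBlockUpperTri (K : Type*) [Field K] (q : ℕ) (r c : ℕ → ℕ) :
    (genBlockUpperTri K q r c).rank =
      Finset.inf' (Finset.range (q + 1)) (by simp) (fun i =>
        (∑ j ∈ Finset.range i, r j) + ∑ j ∈ Finset.Ico i q, c j) := by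
  classical
  set σK := (Σ i : Fin q, Fin (r i.1)) × (Σ j : Fin q, Fin (c j.1)) with hσK
  set F := FractionRing (MvPolynomial σK K) with hF
  set A := genBlockUpperTri K q r c with hA
  set f : ℕ → ℕ := fun i => (∑ j ∈ Finset.range i, r j) + ∑ j ∈ Finset.Ico i q, c j with hf
  have upper : ∀ i ∈ Finset.range (q + 1), A.rank ≤ f i := by
    intro i hi
    rw [Finset.mem_range, Nat.lt_succ_iff] at hi
    set D' : Matrix (Σ j : Fin q, Fin (c j.1)) (Σ j : Fin q, Fin (c j.1)) F :=
      Matrix.diagonal (fun y => if (y.1.1 : ℕ) < i then 1 else 0) with hD'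
    set D : Matrix (Σ j : Fin q, Fin (c j.1)) (Σ j : Fin q, Fin (c j.1)) F :=
      Matrix.diagonal (fun y => if i ≤ (y.1.1 : ℕ) then 1 else 0) with hD
    have hDD : D' + D = 1 := by
      ext y z
      by_cases hyz : y = z
      · subst hyz
        simp only [Matrix.add_apply, hD', hD, Matrix.diagonal_apply_eq, Matrix.one_apply_eq]
        rcases Nat.lt_or_ge y.1.1 i with h | h
        · rw [if_pos h, if_neg (Nat.not_le.2 h), add_zero]
        · rw [if_neg (Nat.not_lt.2 h), if_pos h, zero_add]
      · simp only [Matrix.add_apply, hD', hD, Matrix.diagonal_apply_ne _ hyz,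
          Matrix.one_apply_ne hyz, add_zero]
    have hsum : A = A * D' + A * D := by
      rw [← Matrix.mul_add, hDD, Matrix.mul_one]
    have h2 : (A * D).rank ≤ ∑ j ∈ Finset.Ico i q, c j := by
      refine (Matrix.rank_mul_le_right A D).trans ?_
      rw [hD, Matrix.rank_diagonal]
      have hcard : Fintype.card
            {y : Σ j : Fin q, Fin (c j.1) // (if i ≤ (y.1.1 : ℕ) then (1 : F) else 0) ≠ 0}
          = Fintype.card {y : Σ j : Fin q, Fin (c j.1) // i ≤ y.1.1} :=
        Fintype.card_congr (Equiv.subtypeEquivRight (by intro y; simp))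
      rw [hcard, RankGenAux.card_sigma_subtype q c (fun j => i ≤ j),
        RankGenAux.sum_ite_range_le]
    have h1 : (A * D').rank ≤ ∑ j ∈ Finset.range i, r j := by
      set D'' : Matrix (Σ i : Fin q, Fin (r i.1)) (Σ i : Fin q, Fin (r i.1)) F :=
        Matrix.diagonal (fun x => if (x.1.1 : ℕ) < i then (1 : F) else 0) with hD''
      have hfac : A * D' = D'' * (A * D') := by
        ext x y
        rw [hD'', Matrix.diagonal_mul]
        by_cases hx : (x.1.1 : ℕ) < i
        · rw [if_pos hx, one_mul]
        · rw [if_neg hx, zero_mul, hD', Matrix.mul_diagonal]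
          by_cases hy : (y.1.1 : ℕ) < i
          · have hxy : ¬ (x.1 ≤ y.1) := by
              rw [Fin.not_le, Fin.lt_def]
              omega
            rw [if_pos hy, mul_one]
            simp [hA, genBlockUpperTri, hxy]
          · rw [if_neg hy, mul_zero]
      calc (A * D').rank = (D'' * (A * D')).rank := by rw [← hfac]
        _ ≤ D''.rank := Matrix.rank_mul_le_left _ _
        _ ≤ _ := by
            rw [hD'', Matrix.rank_diagonal]
            have hcard : Fintype.card
                  {x : Σ i' : Fin q, Fin (r i'.1) // (if (x.1.1 : ℕ) < i then (1 : F) else 0) ≠ 0}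
                = Fintype.card {x : Σ i' : Fin q, Fin (r i'.1) // x.1.1 < i} :=
              Fintype.card_congr (Equiv.subtypeEquivRight (by intro x; simp))
            rw [hcard, RankGenAux.card_sigma_subtype q r (fun j => j < i),
              RankGenAux.sum_ite_range_lt hi]
    calc A.rank = (A * D' + A * D).rank := by rw [← hsum]
      _ ≤ (A * D').rank + (A * D).rank := RankGenAux.matrix_rank_add_le _ _
      _ ≤ f i := add_le_add h1 h2
  refine le_antisymm ((Finset.le_inf'_iff _ _).2 upper) ?_
  -- lower bound
  set R := ∑ j ∈ Finset.range q, r j with hR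
  set C := ∑ j ∈ Finset.range q, c j with hC
  set m := Finset.inf' (Finset.range (q + 1)) (by simp) f with hm
  show m ≤ A.rank
  have hmfi : ∀ i, i ≤ q → m ≤ f i := fun i hi =>
    Finset.inf'_le f (Finset.mem_range.2 (Nat.lt_succ_of_le hi))
  have hmR : m ≤ R := by
    have h := hmfi q le_rfl
    simpa [hf, hR] using h
  have hmC : m ≤ C := by
    have h := hmfi 0 (Nat.zero_le q)
    simpa [hf, hC] using h
  have hmt : ∀ t : Fin m, C - m + t.1 < C := fun t => by
    have := t.2; omega
  set ρ : Fin m → (Σ i : Fin q, Fin (r i.1)) :=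
    fun t => (RankGenAux.sigEquiv q r).symm (Fin.castLE hmR t) with hρdef
  set γ : Fin m → (Σ j : Fin q, Fin (c j.1)) :=
    fun t => (RankGenAux.sigEquiv q c).symm ⟨C - m + t.1, hmt t⟩ with hγdef
  have hρ : ∀ t : Fin m, RankGenAux.sigIdx r (ρ t) = t.1 := fun t =>
    RankGenAux.sigEquiv_symm_spec q r _
  have hγ : ∀ t : Fin m, RankGenAux.sigIdx c (γ t) = C - m + t.1 := fun t =>
    RankGenAux.sigEquiv_symm_spec q c _
  have hρinj : Function.Injective ρ := by
    intro s t h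
    have h2 := congrArg (RankGenAux.sigIdx r) h
    rw [hρ, hρ] at h2
    exact Fin.ext h2
  have hγinj : Function.Injective γ := by
    intro s t h
    have h2 := congrArg (RankGenAux.sigIdx c) h
    rw [hγ, hγ] at h2
    exact Fin.ext (by omega)
  have hcompat : ∀ t : Fin m, (ρ t).1 ≤ (γ t).1 := by
    intro t
    rw [Fin.le_def]
    by_contra hlt
    push_neg at hlt
    have h1 : (∑ j ∈ Finset.range (ρ t).1.1, r j) ≤ t.1 := by
      have hs := hρ t
      rw [RankGenAux.sigIdx] at hs
      omega
    have h2 : C - m + t.1 < ∑ j ∈ Finset.range ((γ t).1.1 + 1), c j := by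
      have hs := hγ t
      rw [RankGenAux.sigIdx] at hs
      have h2' : ((γ t).2 : ℕ) < c (γ t).1.1 := (γ t).2.2
      rw [Finset.sum_range_succ]
      omega
    have h3 : (∑ j ∈ Finset.range ((γ t).1.1 + 1), c j) ≤ ∑ j ∈ Finset.range (ρ t).1.1, c j :=
      Finset.sum_le_sum_of_subset (Finset.range_subset_range.2 hlt)
    have h4 : (∑ j ∈ Finset.range (ρ t).1.1, c j) + ∑ j ∈ Finset.Ico (ρ t).1.1 q, c j = C :=
      Finset.sum_range_add_sum_Ico _ (le_of_lt (ρ t).1.2)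
    have h5 : m ≤ (∑ j ∈ Finset.range (ρ t).1.1, r j) + ∑ j ∈ Finset.Ico (ρ t).1.1 q, c j :=
      hmfi _ (le_of_lt (ρ t).1.2)
    have ht := t.2
    omega
  -- the generic square submatrix over the polynomial ring
  set P : Matrix (Fin m) (Fin m) (MvPolynomial σK K) :=
    Matrix.of fun s t => (MvPolynomial.monomial (Finsupp.single ((ρ s, γ t) : σK) 1))
      (if (ρ s).1 ≤ (γ t).1 then (1 : K) else 0) with hP
  have hPB : A.submatrix ρ γ = P.map (algebraMap (MvPolynomial σK K) F) := by
    ext s t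
    simp only [Matrix.submatrix_apply, Matrix.map_apply, hA, genBlockUpperTri, hP,
      Matrix.of_apply]
    split_ifs with h
    · rfl
    · simp
  set Mon : σK →₀ ℕ := ∑ t : Fin m, Finsupp.single ((ρ t, γ t) : σK) 1 with hMon
  have hMind : ∀ v : σK, Mon v = ∑ t : Fin m, (if ((ρ t, γ t) : σK) = v then 1 else 0) := by
    intro v
    rw [hMon, Finsupp.finset_sum_apply]
    exact Finset.sum_congr rfl fun t _ => Finsupp.single_apply
  have hterm : ∀ σ : Equiv.Perm (Fin m),
      (∏ i : Fin m, P (σ i) i) =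
        (MvPolynomial.monomial (∑ t : Fin m, Finsupp.single ((ρ (σ t), γ t) : σK) 1))
          (∏ t : Fin m, if (ρ (σ t)).1 ≤ (γ t).1 then (1 : K) else 0) :=
    fun σ => RankGenAux.prod_monomial Finset.univ _ _
  have hdet : MvPolynomial.coeff Mon P.det = 1 := by
    rw [Matrix.det_apply, MvPolynomial.coeff_sum]
    have hzero : ∀ σ : Equiv.Perm (Fin m), σ ∈ Finset.univ → σ ≠ 1 →
        MvPolynomial.coeff Mon (Equiv.Perm.sign σ • ∏ i : Fin m, P (σ i) i) = 0 := by
      intro σ _ hσ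
      rw [hterm σ, MvPolynomial.coeff_smul]
      have hne : (∑ t : Fin m, Finsupp.single ((ρ (σ t), γ t) : σK) 1) ≠ Mon := by
        intro hEq
        obtain ⟨t₀, ht₀⟩ : ∃ t, σ t ≠ t := by
          by_contra hall
          push_neg at hall
          exact hσ (Equiv.ext hall)
        have h0 : Mon ((ρ (σ t₀), γ t₀) : σK) = 0 := by
          rw [hMind]
          refine Finset.sum_eq_zero fun s _ => ?_
          rw [if_neg]
          intro hpair
          have hsnd : γ s = γ t₀ := congrArg Prod.snd hpair
          have hst : s = t₀ := hγinj hsnd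
          have hfst : ρ s = ρ (σ t₀) := congrArg Prod.fst hpair
          rw [hst] at hfst
          exact ht₀ (hρinj hfst.symm)
        have h1 : (∑ t : Fin m, Finsupp.single ((ρ (σ t), γ t) : σK) 1)
            ((ρ (σ t₀), γ t₀) : σK) ≠ 0 := by
          rw [Finsupp.finset_sum_apply]
          intro hzero'
          have h2 := (Finset.sum_eq_zero_iff).1 hzero' t₀ (Finset.mem_univ _)
          rw [Finsupp.single_apply, if_pos rfl] at h2
          exact one_ne_zero h2
        exact h1 (by rw [hEq, h0])
      rw [MvPolynomial.coeff_monomial, if_neg hne, smul_zero]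
    have hone : MvPolynomial.coeff Mon
        (Equiv.Perm.sign (1 : Equiv.Perm (Fin m)) • ∏ i : Fin m, P ((1 : Equiv.Perm (Fin m)) i) i)
          = 1 := by
      rw [hterm 1, MvPolynomial.coeff_smul]
      have hM1 : (∑ t : Fin m,
          Finsupp.single ((ρ ((1 : Equiv.Perm (Fin m)) t), γ t) : σK) 1) = Mon := by
        rw [hMon]
        exact Finset.sum_congr rfl fun t _ => by simp
      have ha1 : (∏ t : Fin m,
          if (ρ ((1 : Equiv.Perm (Fin m)) t)).1 ≤ (γ t).1 then (1 : K) else 0) = 1 :=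
        Finset.prod_eq_one fun t _ => by simp [hcompat t]
      rw [hM1, MvPolynomial.coeff_monomial, if_pos rfl, ha1]
      simp
    rw [Finset.sum_eq_single_of_mem (1 : Equiv.Perm (Fin m)) (Finset.mem_univ _) hzero, hone]
  have hPdet : P.det ≠ 0 := by
    intro h
    rw [h] at hdet
    simp at hdet
  have hBdet : (A.submatrix ρ γ).det ≠ 0 := by
    rw [hPB, ← RingHom.mapMatrix_apply, ← RingHom.map_det]
    intro h
    exact hPdet ((map_eq_zero_iff _ (IsFractionRing.injective (MvPolynomial σK K) F)).1 h)
  have hrankB : (A.submatrix ρ γ).rank = m := by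
    rw [Matrix.rank_of_isUnit _ ((Matrix.isUnit_iff_isUnit_det _).2 (isUnit_iff_ne_zero.2 hBdet)),
      Fintype.card_fin]
  have hfac2 : A.submatrix ρ γ =
      ((1 : Matrix (Σ i : Fin q, Fin (r i.1)) (Σ i : Fin q, Fin (r i.1)) F).submatrix ρ id) *
        (A * ((1 : Matrix (Σ j : Fin q, Fin (c j.1)) (Σ j : Fin q, Fin (c j.1)) F).submatrix id γ)) := by
    ext s t
    simp [Matrix.mul_apply, Matrix.submatrix_apply, Matrix.one_apply, ite_mul, mul_ite,
      zero_mul, mul_zero, one_mul, mul_one, Finset.sum_ite_eq, Finset.sum_ite_eq']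
  have hle : (A.submatrix ρ γ).rank ≤ A.rank := by
    rw [hfac2]
    exact (Matrix.rank_mul_le_right _ _).trans (Matrix.rank_mul_le_left _ _)
  rw [← hrankB]
  exact hle
end

section
/- Let a_1 ≥ ... ≥ a_{m} and d_1 ≥ ... ≥ d_{n} be positive integers. Define indices r_1 = max{ j ≤ n : d_j > a_1 }, s_1 = max{ i ≤ m : d_{r_1+1} ≤ a_i }, and inductively r_l = max{ j ≤ n : d_j > a_{s_{l-1}+1} }, s_l = max{ i ≤ m : d_{r_l+1} ≤ a_i }, terminating with r_t = n (with the convention that undefined maxima are 0). Let Φ be the block matrix (Φ_{ij}) over a rational function field, where Φ_{ij} is the a_i × d_j lower triangular banded Toeplitz matrix with generic (pairwise distinct indeterminate) entries x^{ij}_1,...,x^{ij}_{a_i-d_j+1} repeated along diagonals when a_i ≥ d_j, and Φ_{ij} = 0 when a_i < d_j. Then rank Φ = min over 0 ≤ i ≤ t-1 of ( a_1 + ... + a_{s_i} + d_{r_{i+1}+1} + ... + d_{r_t} ). -/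
/-!
Upper bound: for every `l < t`, the blocks of rows `> s l` against columns `≤ r (l + 1)` vanish,
because there `a i ≤ a (s l + 1) < d (r (l + 1)) ≤ d j`; so the rank is at most the number of
remaining rows, `a 1 + ⋯ + a (s l)`, plus the number of remaining columns,
`d (r (l + 1) + 1) + ⋯ + d n`.

Lower bound: for an index `l₀` attaining the minimum we specialize the indeterminates to `0` and
`1` so that a square submatrix of that size becomes unitriangular. Rows of the blocks `≤ s l₀`
are matched with columns of the blocks `≤ r (l₀ + 1)`, both read backwards (reversing the rows
and columns inside every block preserves the band pattern), and rows of the blocks `> s l₀` with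
columns of the blocks `> r (l₀ + 1)`. Inside each part, row blocks and column blocks are laid end
to end along a line of positions, and position `p` matches the `p`-th row with a column of the
column block covering `p`; this works as soon as every column block is not larger than the row
blocks it meets. The minimality of `l₀` gives exactly this: comparing the bound at `l₀` with
the bound at a suitable index shows that whenever row `i` and column `j` meet, there is a `K ≥ 1`
with `i ≤ s K` and `r K < j`, whence `d j ≤ d (r K + 1) ≤ a (s K) ≤ a i`.
-/

open Matrix

/-- The generic homomorphism matrix `φ^{PP2}` between preprojective Kronecker
representations: block `(i,j)` has size `a (i+1) × d (j+1)` (indices are 1-based via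
`a, d : ℕ → ℕ`), and is the lower triangular banded Toeplitz matrix with generic
entries `x^{ij}_{u-v+1}` (variable index `((i,j), u-v)`, constant along diagonals)
when `a (i+1) ≥ d (j+1)`, and zero otherwise. -/
noncomputable def genPP2 (K : Type*) [Field K] (m n : ℕ) (a d : ℕ → ℕ) :
    Matrix (Σ i : Fin m, Fin (a (i.1 + 1))) (Σ j : Fin n, Fin (d (j.1 + 1)))
      (FractionRing (MvPolynomial ((Fin m × Fin n) × ℕ) K)) :=
  fun x y =>
    if d (y.1.1 + 1) ≤ a (x.1.1 + 1) ∧ (y.2 : ℕ) ≤ (x.2 : ℕ) ∧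
        (x.2 : ℕ) - (y.2 : ℕ) ≤ a (x.1.1 + 1) - d (y.1.1 + 1) then
      algebraMap (MvPolynomial ((Fin m × Fin n) × ℕ) K) _
        (MvPolynomial.X ((x.1, y.1), (x.2 : ℕ) - (y.2 : ℕ)))
    else 0

open Finset

namespace Matrix

variable {ι ρ γ F : Type*} [Fintype ι] [DecidableEq ι] [Fintype γ] [Field F]

theorem rank_add_le [Fintype ρ] (A B : Matrix ρ γ F) : (A + B).rank ≤ A.rank + B.rank := by
  unfold rank
  rw [mulVecLin_add]
  exact (Submodule.finrank_mono (LinearMap.range_add_le _ _)).trans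
    (Submodule.finrank_add_le_finrank_add_finrank _ _)

theorem rank_le_card_add_card_of_eq_zero [Fintype ρ] [DecidableEq ρ] [DecidableEq γ]
    (M : Matrix ρ γ F) (rows : Finset ρ) (cols : Finset γ)
    (h : ∀ x ∉ rows, ∀ y ∈ cols, M x y = 0) : M.rank ≤ #rows + #colsᶜ := by
  classical
  set P : Matrix ρ ρ F := diagonal fun x => if x ∈ rows then 1 else 0
  set Q : Matrix γ γ F := diagonal fun y => if y ∈ cols then 1 else 0
  set Q' : Matrix γ γ F := diagonal fun y => if y ∈ cols then 0 else 1
  have hP : P.rank = #rows := by rw [rank_diagonal, Fintype.card_subtype]; simp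
  have hQ' : Q'.rank = #colsᶜ := by
    rw [rank_diagonal, Fintype.card_subtype]
    congr 1
    ext
    simp
  have hsplit : M = P * (M * Q) + M * Q' := by
    ext x y
    simp only [P, Q, Q', Matrix.add_apply, mul_diagonal, diagonal_mul]
    by_cases hy : y ∈ cols
    · by_cases hx : x ∈ rows
      · simp [hx, hy]
      · simp [hx, hy, h x hx y hy]
    · simp [hy]
  calc M.rank = (P * (M * Q) + M * Q').rank := congrArg rank hsplit
    _ ≤ (P * (M * Q)).rank + (M * Q').rank := rank_add_le _ _
    _ ≤ #rows + #colsᶜ := add_le_add ((rank_mul_le_left _ _).trans hP.le)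
        ((rank_mul_le_right _ _).trans hQ'.le)

theorem det_eq_prod_diag_of_weight {R : Type*} [CommRing R] (M : Matrix ι ι R) (w : ι → ℕ)
    (h : ∀ i j, M i j ≠ 0 → i = j ∨ w i < w j) : M.det = ∏ i, M i i := by
  rw [det_apply, Finset.sum_eq_single (1 : Equiv.Perm ι)]
  · simp
  · intro τ _ hτ
    by_contra hne
    have hnz : ∀ i, M (τ i) i ≠ 0 := by
      intro i hi
      apply hne
      rw [Finset.prod_eq_zero (f := fun j => M (τ j) j) (Finset.mem_univ i) hi, smul_zero]
    -- off the identity, the weights would strictly decrease in total along `τ`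
    obtain ⟨i₀, hi₀⟩ : ∃ i, τ i ≠ i := by
      by_contra! hfix
      exact hτ (Equiv.ext hfix)
    have hlt : ∑ i, w (τ i) < ∑ i, w i :=
      Finset.sum_lt_sum (fun i _ => (h _ _ (hnz i)).elim (fun he => by rw [he]) le_of_lt)
        ⟨i₀, Finset.mem_univ _, (h _ _ (hnz i₀)).resolve_left hi₀⟩
    rw [Equiv.sum_comp τ w] at hlt
    exact lt_irrefl _ hlt
  · simp

theorem card_le_rank_of_det_submatrix_ne_zero (M : Matrix ρ γ F) (row : ι → ρ) (col : ι → γ)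
    (h : (M.submatrix row col).det ≠ 0) : Fintype.card ι ≤ M.rank := by
  rw [← rank_of_isUnit _ ((isUnit_iff_isUnit_det _).2 (isUnit_iff_ne_zero.2 h))]
  exact rank_submatrix_le M row col

theorem card_le_rank_map_of_det_submatrix_map_ne_zero {R S : Type*} [CommRing R] [CommRing S]
    (M : Matrix ρ γ R) (f : R →+* F) (hf : Function.Injective f) (φ : R →+* S)
    (row : ι → ρ) (col : ι → γ) (h : ((M.map φ).submatrix row col).det ≠ 0) :
    Fintype.card ι ≤ (M.map f).rank := by
  refine card_le_rank_of_det_submatrix_ne_zero _ row col ?_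
  have hφ : φ (M.submatrix row col).det ≠ 0 := by rwa [RingHom.map_det]
  change ((M.submatrix row col).map f).det ≠ 0
  rw [← RingHom.mapMatrix_apply, ← RingHom.map_det]
  exact (map_ne_zero_iff f hf).2 fun h0 => hφ (by rw [h0, map_zero])

end Matrix

/-- Rows and columns are indexed by a block and an unbounded offset inside it, so that blocks can
be relabelled freely; only offsets below the block sizes matter. -/
def bandMatrix {ι κ R : Type*} [Zero R] (α : ι → ℕ) (δ : κ → ℕ) (x : (ι × κ) × ℕ → R) :
    Matrix (ι × ℕ) (κ × ℕ) R :=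
  fun p q => if δ q.1 ≤ α p.1 ∧ q.2 ≤ p.2 ∧ p.2 - q.2 ≤ α p.1 - δ q.1 then
    x ((p.1, q.1), p.2 - q.2) else 0

theorem genPP2_eq_map_bandMatrix (K : Type*) [Field K] (m n : ℕ) (a d : ℕ → ℕ) :
    genPP2 K m n a d =
      ((bandMatrix (fun i : Fin m => a (i.1 + 1)) (fun j : Fin n => d (j.1 + 1))
        (fun y => (MvPolynomial.X y : MvPolynomial ((Fin m × Fin n) × ℕ) K))).submatrix
          (fun x => (x.1, x.2.1)) (fun y => (y.1, y.2.1))).map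
        (algebraMap _ (FractionRing (MvPolynomial ((Fin m × Fin n) × ℕ) K))) := by
  ext x y
  simp only [genPP2, bandMatrix, map_apply, submatrix_apply]
  split_ifs <;> simp

theorem card_le_rank_genPP2 (K : Type*) [Field K] (m n : ℕ) (a d : ℕ → ℕ) {ι : Type*} [Fintype ι]
    [DecidableEq ι] (σ : (ℕ × ℕ) × ℕ → K) (row col : ι → ℕ × ℕ)
    (hrow : ∀ k, (row k).1 < m ∧ (row k).2 < a ((row k).1 + 1))
    (hcol : ∀ k, (col k).1 < n ∧ (col k).2 < d ((col k).1 + 1))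
    (h : ((bandMatrix (fun i => a (i + 1)) (fun j => d (j + 1)) σ).submatrix row col).det ≠ 0) :
    Fintype.card ι ≤ (genPP2 K m n a d).rank := by
  rw [genPP2_eq_map_bandMatrix]
  refine card_le_rank_map_of_det_submatrix_map_ne_zero _ _ (IsFractionRing.injective _ _)
    (MvPolynomial.eval fun y => σ ((y.1.1, y.1.2), y.2))
    (fun k => ⟨⟨(row k).1, (hrow k).1⟩, ⟨(row k).2, (hrow k).2⟩⟩)
    (fun k => ⟨⟨(col k).1, (hcol k).1⟩, ⟨(col k).2, (hcol k).2⟩⟩) ?_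
  convert h using 2
  ext k k'
  simp only [map_apply, submatrix_apply, bandMatrix]
  split_ifs <;> simp

theorem card_filter_sigma_fin_lt (f : ℕ → ℕ) {c N : ℕ} (hc : c ≤ N) :
    #{x : Σ i : Fin N, Fin (f (i.1 + 1)) | x.1.1 < c} = ∑ j ∈ Ioc 0 c, f j := by
  have hfilter : ({x : Σ i : Fin N, Fin (f (i.1 + 1)) | x.1.1 < c} : Finset _) =
      ({i : Fin N | i.1 < c} : Finset _).sigma fun _ => univ := by
    ext x
    simp
  have hrange : (range N).filter (· < c) = range c := by
    ext i
    simp only [mem_filter, mem_range]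
    omega
  rw [hfilter, card_sigma]
  simp only [card_univ, Fintype.card_fin]
  rw [sum_filter, Fin.sum_univ_eq_sum_range (fun i => if i < c then f (i + 1) else 0),
    ← sum_filter, hrange, range_eq_Ico, sum_Ico_add' f 0 c 1, ← Ico_add_one_add_one_eq_Ioc,
    zero_add]

theorem rank_genPP2_le (K : Type*) [Field K] (m n : ℕ) (a d : ℕ → ℕ) {s r : ℕ} (hs : s ≤ m)
    (hr : r ≤ n) (hzero : ∀ i j, s < i → i ≤ m → 1 ≤ j → j ≤ r → a i < d j) :
    (genPP2 K m n a d).rank ≤ (∑ i ∈ Ioc 0 s, a i) + ∑ j ∈ Ioc r n, d j := by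
  classical
  refine (rank_le_card_add_card_of_eq_zero _ ({x | x.1.1 < s} : Finset (Σ i : Fin m, _))
    ({y | y.1.1 < r} : Finset (Σ j : Fin n, _)) ?_).trans ?_
  · intro x hx y hy
    simp only [mem_filter, mem_univ, true_and, not_lt] at hx hy
    have := hzero (x.1.1 + 1) (y.1.1 + 1) (by omega) x.1.2 (by omega) (by omega)
    rw [genPP2, if_neg (by omega)]
  · have hcard : Fintype.card (Σ j : Fin n, Fin (d (j.1 + 1))) = ∑ j ∈ Ioc 0 n, d j := by
      rw [← card_filter_sigma_fin_lt d le_rfl, filter_true_of_mem fun y _ => y.1.2, card_univ]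
    rw [card_filter_sigma_fin_lt a hs, card_compl, hcard, card_filter_sigma_fin_lt d hr,
      ← sum_Ioc_consecutive d (Nat.zero_le r) hr, Nat.add_sub_cancel_left]

namespace Staircase

variable (α δ : ℕ → ℕ)

/-- Blocks of sizes `α 0, α 1, …` are laid end to end: block `b` covers the positions
`[blockStart α b, blockStart α (b + 1))`, and `blockOf α p` is the block covering `p`. -/
def blockStart (b : ℕ) : ℕ := ∑ c ∈ range b, α c

theorem blockStart_mono : Monotone (blockStart α) := fun _ _ h =>
  sum_le_sum_of_subset (range_subset_range.2 h)

theorem blockStart_succ (b : ℕ) : blockStart α (b + 1) = blockStart α b + α b :=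
  sum_range_succ _ _

theorem blockStart_add_one (f : ℕ → ℕ) (c k : ℕ) :
    blockStart (fun b => f (c + b + 1)) k = ∑ j ∈ Ioc c (c + k), f j := by
  induction k with
  | zero => simp [blockStart]
  | succ k ih => rw [blockStart_succ, ih, ← add_assoc, sum_Ioc_succ_top (by omega)]

theorem blockStart_sub (f : ℕ → ℕ) {c k : ℕ} (hk : k ≤ c) :
    blockStart (fun b => f (c - b)) k = ∑ j ∈ Ioc (c - k) c, f j := by
  induction k with
  | zero => simp [blockStart]
  | succ k ih =>
    rw [blockStart_succ, ih (by omega), ← sum_Ioc_consecutive f (show c - (k + 1) ≤ c - k by omega)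
      (Nat.sub_le c k), show c - k = c - (k + 1) + 1 by omega, Nat.Ioc_succ_singleton,
      sum_singleton, add_comm]

open Classical in
noncomputable def blockOf (p : ℕ) : ℕ :=
  if h : ∃ b, p < blockStart α (b + 1) then Nat.find h else 0

variable {α} {b p p' p₂ P : ℕ}

theorem blockOf_spec (hp : p < blockStart α P) :
    blockStart α (blockOf α p) ≤ p ∧ p < blockStart α (blockOf α p + 1) := by
  have h : ∃ b, p < blockStart α (b + 1) := ⟨P, hp.trans_le (blockStart_mono α P.le_succ)⟩
  rw [blockOf, dif_pos h]
  refine ⟨?_, Nat.find_spec h⟩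
  rcases Nat.eq_zero_or_eq_succ_pred (Nat.find h) with h0 | hs
  · rw [h0]
    simp [blockStart]
  · rw [hs]
    exact not_lt.1 (Nat.find_min h (Nat.pred_lt_self (by omega)))

theorem blockOf_lt (hp : p < blockStart α P) : blockOf α p < P := by
  by_contra! h
  have := blockStart_mono α h
  have := (blockOf_spec hp).1
  omega

theorem blockOf_eq (h₁ : blockStart α b ≤ p) (h₂ : p < blockStart α (b + 1)) :
    blockOf α p = b := by
  obtain ⟨hl, hu⟩ := blockOf_spec h₂
  rcases lt_trichotomy (blockOf α p) b with h | h | h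
  · have := blockStart_mono α (show blockOf α p + 1 ≤ b by omega); omega
  · exact h
  · have := blockStart_mono α (show b + 1 ≤ blockOf α p by omega); omega

theorem blockOf_mono (h : p ≤ p') (hp' : p' < blockStart α P) : blockOf α p ≤ blockOf α p' := by
  obtain ⟨hl', hu'⟩ := blockOf_spec hp'
  obtain ⟨hl, -⟩ := blockOf_spec (h.trans_lt hp')
  by_contra! hlt
  have := blockStart_mono α (show blockOf α p' + 1 ≤ blockOf α p by omega)
  omega

variable (α) (T : ℕ)

def Fits : Prop :=
  ∀ i q, blockStart α i < T → blockStart δ q < T → blockStart δ q < blockStart α (i + 1) →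
    blockStart α i < blockStart δ (q + 1) → δ q ≤ α i

noncomputable def firstRowBlock (q : ℕ) : ℕ := blockOf α (blockStart δ q)

noncomputable def overhang (q : ℕ) : ℕ :=
  blockStart δ (q + 1) - blockStart α (firstRowBlock α δ q + 1)

/-- Position `p` is matched with the row at position `p` and with a column of the column
block `q` containing `p`. If `q` overhangs its first row block, its last columns are matched
with the end of that row block through the diagonal `bandShift`, and its first `overhang`
columns with the start of the next row block through the diagonal `0`. -/
noncomputable def colOffset (p : ℕ) : ℕ :=
  if p < blockStart α (firstRowBlock α δ (blockOf δ p) + 1) then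
    p - blockStart δ (blockOf δ p) + overhang α δ (blockOf δ p)
  else p - blockStart α (firstRowBlock α δ (blockOf δ p) + 1)

noncomputable def bandShift (i q : ℕ) : ℕ :=
  if i = firstRowBlock α δ q then blockStart δ q - blockStart α i - overhang α δ q else 0

noncomputable def rowPos (p : ℕ) : ℕ × ℕ := (blockOf α p, p - blockStart α (blockOf α p))

noncomputable def colPos (p : ℕ) : ℕ × ℕ := (blockOf δ p, colOffset α δ p)

def Meets (i q : ℕ) : Prop := ∃ p < T, blockOf α p = i ∧ blockOf δ p = q

/-- The order in which the matched entries form a triangular matrix: positions in the part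
of an overhanging column block that lies in its first row block come last, in reverse. -/
noncomputable def weight (p : ℕ) : ℕ :=
  if 0 < overhang α δ (blockOf δ p) ∧
      p < blockStart α (firstRowBlock α δ (blockOf δ p) + 1) then 2 * T - p
  else p

open Classical in
noncomputable def value (R : Type*) [Zero R] [One R] (y : (ℕ × ℕ) × ℕ) : R :=
  if Meets α δ T y.1.1 y.1.2 ∧ y.2 = bandShift α δ y.1.1 y.1.2 then 1 else 0

variable {α δ T} {Q : ℕ} (hA : T ≤ blockStart α P) (hD : T ≤ blockStart δ Q)
  (hfit : Fits α δ T)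
include hA hD

theorem blockStart_firstRowBlock {q : ℕ} (hp : p < T) (hq : blockOf δ p = q) :
    blockStart α (firstRowBlock α δ q) ≤ blockStart δ q ∧
      blockStart δ q < blockStart α (firstRowBlock α δ q + 1) := by
  have := (blockOf_spec (hp.trans_le hD)).1
  subst hq
  exact blockOf_spec (by omega : blockStart δ (blockOf δ p) < blockStart α P)

include hfit

theorem blockOf_eq_firstRowBlock {q : ℕ} (hp : p < T) (hq : blockOf δ p = q)
    (h : p < blockStart α (firstRowBlock α δ q + 1)) :
    blockOf α p = firstRowBlock α δ q ∧ δ q ≤ α (firstRowBlock α δ q) := by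
  obtain ⟨hi₁, hi₂⟩ := blockStart_firstRowBlock hA hD hp hq
  obtain ⟨hq₁, hq₂⟩ := blockOf_spec (hp.trans_le hD)
  rw [hq] at hq₁ hq₂
  exact ⟨blockOf_eq (by omega) h, hfit _ _ (by omega) (by omega) hi₂ (by omega)⟩

theorem blockOf_eq_firstRowBlock_succ {q : ℕ} (hp : p < T) (hq : blockOf δ p = q)
    (h : blockStart α (firstRowBlock α δ q + 1) ≤ p) :
    blockOf α p = firstRowBlock α δ q + 1 ∧ δ q ≤ α (firstRowBlock α δ q + 1) := by
  obtain ⟨hi₁, hi₂⟩ := blockStart_firstRowBlock hA hD hp hq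
  obtain ⟨hq₁, hq₂⟩ := blockOf_spec (hp.trans_le hD)
  rw [hq] at hq₁ hq₂
  set i₀ := firstRowBlock α δ q
  have := blockStart_mono α (show i₀ + 1 ≤ i₀ + 1 + 1 by omega)
  have hδ := hfit (i₀ + 1) q (by omega) (by omega) (by omega) (by omega)
  have := blockStart_succ α (i₀ + 1)
  have := blockStart_succ δ q
  exact ⟨blockOf_eq h (by omega), hδ⟩

theorem band_rowPos_colPos (hp : p < T) :
    colOffset α δ p < δ (blockOf δ p) ∧
      bandShift α δ (blockOf α p) (blockOf δ p) + δ (blockOf δ p) ≤ α (blockOf α p) ∧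
      p - blockStart α (blockOf α p) =
        colOffset α δ p + bandShift α δ (blockOf α p) (blockOf δ p) := by
  obtain ⟨hq₁, hq₂⟩ := blockOf_spec (hp.trans_le hD)
  obtain ⟨hi₁, hi₂⟩ := blockStart_firstRowBlock hA hD hp rfl
  have := blockStart_succ δ (blockOf δ p)
  have := blockStart_succ α (firstRowBlock α δ (blockOf δ p))
  by_cases h : p < blockStart α (firstRowBlock α δ (blockOf δ p) + 1)
  · obtain ⟨hi, hδ⟩ := blockOf_eq_firstRowBlock hA hD hfit hp rfl h
    rw [hi, colOffset, if_pos h, bandShift, if_pos rfl, overhang]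
    omega
  · obtain ⟨hi, hδ⟩ := blockOf_eq_firstRowBlock_succ hA hD hfit hp rfl (not_lt.1 h)
    rw [hi, colOffset, if_neg h, bandShift, if_neg (by omega)]
    omega

omit hfit in
theorem weight_eq_self {q : ℕ} (hp : p < T) (hp' : p' < T) (hq : blockOf δ p' = q)
    (hpq : p < blockStart δ q) (hi : blockOf α p = firstRowBlock α δ q) :
    weight α δ T p = p := by
  rw [weight, if_neg]
  rintro ⟨hover, hlt⟩
  obtain ⟨hq₁, hq₂⟩ := blockOf_spec (hp.trans_le hD)
  obtain ⟨-, hi₂⟩ := blockStart_firstRowBlock hA hD hp' hq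
  have hle : firstRowBlock α δ (blockOf δ p) ≤ blockOf α p :=
    blockOf_mono hq₁ (hp.trans_le hA)
  have hqq : blockOf δ p + 1 ≤ q := by
    by_contra! h
    have := blockStart_mono δ (show q ≤ blockOf δ p by omega)
    omega
  have := blockStart_mono δ hqq
  rcases hle.lt_or_eq with hlt' | heq
  · have := blockStart_mono α (show firstRowBlock α δ (blockOf δ p) + 1 ≤ blockOf α p by omega)
    have := (blockOf_spec (hp.trans_le hA)).1
    omega
  · rw [overhang, heq, hi] at hover
    omega

theorem weight_lt_of_lt_blockStart {q : ℕ} (hp : p < T) (hp' : p' < T) (hp₂ : p₂ < T)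
    (hq : blockOf δ p' = q) (hq₂ : blockOf δ p₂ = q) (hi₂ : blockOf α p₂ = blockOf α p)
    (hsame : blockOf α p ≠ blockOf α p') (h' : p' < blockStart α (firstRowBlock α δ q + 1)) :
    weight α δ T p < weight α δ T p' := by
  set i₀ := firstRowBlock α δ q
  obtain ⟨-, hp₂q⟩ := blockOf_spec (hp₂.trans_le hD)
  rw [hq₂] at hp₂q
  -- `p'` lies in the row block `i₀`, so `p` lies in the row block `i₀ + 1`, after `p'`
  have hi' : blockOf α p' = i₀ := (blockOf_eq_firstRowBlock hA hD hfit hp' hq h').1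
  have hp₂' : blockStart α (i₀ + 1) ≤ p₂ := by
    by_contra! h
    exact hsame (by rw [← hi₂, hi', (blockOf_eq_firstRowBlock hA hD hfit hp₂ hq₂ h).1])
  have hi : blockOf α p = i₀ + 1 := hi₂ ▸ (blockOf_eq_firstRowBlock_succ hA hD hfit hp₂ hq₂ hp₂').1
  have hi₁ := (blockOf_spec (hp.trans_le hA)).1
  rw [hi] at hi₁
  have hover : overhang α δ q = blockStart δ (q + 1) - blockStart α (i₀ + 1) := rfl
  have hw' : weight α δ T p' = 2 * T - p' := by
    rw [weight, hq, if_pos ⟨by omega, h'⟩]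
  rw [hw', weight]
  split_ifs <;> omega

theorem weight_lt_of_blockStart_le {q : ℕ} (hp : p < T) (hp' : p' < T) (hp₂ : p₂ < T)
    (hq : blockOf δ p' = q) (hq₂ : blockOf δ p₂ = q) (hi₂ : blockOf α p₂ = blockOf α p)
    (hsame : blockOf α p ≠ blockOf α p') (h' : blockStart α (firstRowBlock α δ q + 1) ≤ p')
    (heq : p - blockStart α (blockOf α p) = colOffset α δ p' + bandShift α δ (blockOf α p) q) :
    weight α δ T p < weight α δ T p' := by
  set i₀ := firstRowBlock α δ q
  obtain ⟨hq₁, hq₂'⟩ := blockOf_spec (hp'.trans_le hD)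
  rw [hq] at hq₁ hq₂'
  obtain ⟨hr₁, hr₂⟩ := blockStart_firstRowBlock hA hD hp' hq
  have := blockStart_succ δ q
  have := blockStart_succ α i₀
  -- `p'` lies in the row block `i₀ + 1`, so `p` lies in the row block `i₀`, at `p' - δ q`
  have hi' : blockOf α p' = i₀ + 1 := (blockOf_eq_firstRowBlock_succ hA hD hfit hp' hq h').1
  obtain ⟨hi, hδ⟩ : blockOf α p = i₀ ∧ δ q ≤ α i₀ := by
    by_cases h₂ : p₂ < blockStart α (i₀ + 1)
    · exact hi₂ ▸ blockOf_eq_firstRowBlock hA hD hfit hp₂ hq₂ h₂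
    · exfalso
      exact hsame (by
        rw [← hi₂, hi', (blockOf_eq_firstRowBlock_succ hA hD hfit hp₂ hq₂ (not_lt.1 h₂)).1])
  have hi₁ := (blockOf_spec (hp.trans_le hA)).1
  have hcol : colOffset α δ p' = p' - blockStart α (i₀ + 1) := by
    rw [colOffset, hq, if_neg (not_lt.2 h')]
  have hshift : bandShift α δ i₀ q = blockStart δ q - blockStart α i₀ - overhang α δ q :=
    if_pos rfl
  have hover : overhang α δ q = blockStart δ (q + 1) - blockStart α (i₀ + 1) := rfl
  have hw' : weight α δ T p' = p' := by
    rw [weight, hq, if_neg fun h => (not_lt.2 h') h.2]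
  rw [hi, hcol, hshift] at heq
  rw [hi] at hi₁
  rw [weight_eq_self hA hD hp hp' hq (by omega) hi, hw']
  omega

theorem eq_or_weight_lt (hp : p < T) (hp' : p' < T)
    (hmeet : Meets α δ T (blockOf α p) (blockOf δ p'))
    (heq : p - blockStart α (blockOf α p) =
      colOffset α δ p' + bandShift α δ (blockOf α p) (blockOf δ p')) :
    p = p' ∨ weight α δ T p < weight α δ T p' := by
  obtain ⟨p₂, hp₂, hi₂, hq₂⟩ := hmeet
  by_cases hsame : blockOf α p = blockOf α p'
  · left
    obtain ⟨-, -, hdiag'⟩ := band_rowPos_colPos hA hD hfit hp'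
    have hi₁ := (blockOf_spec (hp.trans_le hA)).1
    have hi₁' := (blockOf_spec (hp'.trans_le hA)).1
    rw [hsame] at heq hi₁
    omega
  right
  by_cases h' : p' < blockStart α (firstRowBlock α δ (blockOf δ p') + 1)
  · exact weight_lt_of_lt_blockStart hA hD hfit hp hp' hp₂ rfl hq₂ hi₂ hsame h'
  · exact weight_lt_of_blockStart_le hA hD hfit hp hp' hp₂ rfl hq₂ hi₂ hsame (not_lt.1 h') heq

omit hA hD hfit in
theorem bandMatrix_value_ne_zero {R : Type*} [Zero R] [One R]
    (h : bandMatrix α δ (value α δ T R) (rowPos α p) (colPos α δ p') ≠ 0) :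
    Meets α δ T (blockOf α p) (blockOf δ p') ∧
      p - blockStart α (blockOf α p) =
        colOffset α δ p' + bandShift α δ (blockOf α p) (blockOf δ p') := by
  classical
  dsimp only [bandMatrix, value, rowPos, colPos] at h
  rw [Ne, ite_eq_right_iff, Classical.not_imp, ite_eq_right_iff, Classical.not_imp] at h
  obtain ⟨⟨-, hle, -⟩, ⟨hmeet, hshift⟩, -⟩ := h
  exact ⟨hmeet, by omega⟩

theorem det_minor (R : Type*) [CommRing R] :
    ((bandMatrix α δ (value α δ T R)).submatrix (fun k : Fin T => rowPos α k)
      (fun k : Fin T => colPos α δ k)).det = 1 := by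
  rw [det_eq_prod_diag_of_weight _ fun k : Fin T => weight α δ T k]
  · refine Finset.prod_eq_one fun k _ => ?_
    obtain ⟨hlt, hle, heq⟩ := band_rowPos_colPos hA hD hfit k.2
    have hmeet : Meets α δ T (blockOf α k) (blockOf δ k) := ⟨k, k.2, rfl, rfl⟩
    simp only [submatrix_apply, bandMatrix, rowPos, colPos, value]
    rw [if_pos ⟨by omega, by omega, by omega⟩, if_pos ⟨hmeet, by omega⟩]
  · intro k k' h
    obtain ⟨hmeet, heq⟩ := bandMatrix_value_ne_zero h
    exact (eq_or_weight_lt hA hD hfit k.2 k'.2 hmeet heq).imp_left Fin.ext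

theorem exists_minor_det_eq_one (R : Type*) [CommRing R] :
    ∃ (x : (ℕ × ℕ) × ℕ → R) (row col : Fin T → ℕ × ℕ),
      (∀ k, (row k).1 < P ∧ (row k).2 < α (row k).1) ∧
      (∀ k, (col k).1 < Q ∧ (col k).2 < δ (col k).1) ∧
      ((bandMatrix α δ x).submatrix row col).det = 1 := by
  refine ⟨value α δ T R, fun k => rowPos α k, fun k => colPos α δ k,
    fun k => ⟨blockOf_lt (k.2.trans_le hA), ?_⟩,
    fun k => ⟨blockOf_lt (k.2.trans_le hD), (band_rowPos_colPos hA hD hfit k.2).1⟩,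
    det_minor hA hD hfit R⟩
  have := blockOf_spec (k.2.trans_le hA)
  have := blockStart_succ α (blockOf α k)
  simp only [rowPos]
  omega

end Staircase

open Staircase (blockStart blockStart_add_one blockStart_sub blockStart_mono Fits)

def reflectPos (f : ℕ → ℕ) (s : ℕ) (y : ℕ × ℕ) : ℕ × ℕ := (s - 1 - y.1, f (s - y.1) - 1 - y.2)

def shiftPos (s : ℕ) (y : ℕ × ℕ) : ℕ × ℕ := (s + y.1, y.2)

theorem reflectPos_lt {f : ℕ → ℕ} {s N : ℕ} {y : ℕ × ℕ} (hs : s ≤ N)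
    (hy : y.1 < s ∧ y.2 < f (s - y.1)) :
    (reflectPos f s y).1 < N ∧ (reflectPos f s y).2 < f ((reflectPos f s y).1 + 1) := by
  simp only [reflectPos, show s - 1 - y.1 + 1 = s - y.1 by omega]
  omega

theorem shiftPos_lt {f : ℕ → ℕ} {s N : ℕ} {y : ℕ × ℕ} (hy : y.1 < N - s ∧ y.2 < f (s + y.1 + 1)) :
    (shiftPos s y).1 < N ∧ (shiftPos s y).2 < f ((shiftPos s y).1 + 1) :=
  ⟨by simp only [shiftPos]; omega, hy.2⟩

section TwoStaircases

variable {R : Type*} [Zero R] (a d : ℕ → ℕ) (s r : ℕ) (x₁ x₂ : (ℕ × ℕ) × ℕ → R)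

/-- Combines a specialization `x₁` for the blocks `< s` of rows and `< r` of columns, taken in
reverse order, with a specialization `x₂` for the blocks `≥ s` of rows and `≥ r` of columns.
Reversing the rows and columns of an `α × δ` block sends its diagonal `k` to `α - δ - k`. -/
def twoStaircaseValue (y : (ℕ × ℕ) × ℕ) : R :=
  if y.1.1 < s ∧ y.1.2 < r then
    x₁ ((s - 1 - y.1.1, r - 1 - y.1.2), a (y.1.1 + 1) - d (y.1.2 + 1) - y.2)
  else if s ≤ y.1.1 ∧ r ≤ y.1.2 then x₂ ((y.1.1 - s, y.1.2 - r), y.2)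
  else 0

variable {a d s r} {b q u v i j : ℕ}

theorem bandMatrix_twoStaircaseValue_reflectPos (hb : b < s) (hq : q < r) (hu : u < a (s - b))
    (hv : v < d (r - q)) :
    bandMatrix (fun i => a (i + 1)) (fun j => d (j + 1)) (twoStaircaseValue a d s r x₁ x₂)
        (reflectPos a s (b, u)) (reflectPos d r (q, v)) =
      bandMatrix (fun b => a (s - b)) (fun q => d (r - q)) x₁ (b, u) (q, v) := by
  have ha : a (s - 1 - b + 1) = a (s - b) := by rw [show s - 1 - b + 1 = s - b by omega]
  have hd : d (r - 1 - q + 1) = d (r - q) := by rw [show r - 1 - q + 1 = r - q by omega]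
  simp only [bandMatrix, twoStaircaseValue, reflectPos, ha, hd]
  split_ifs with h₁ h₂ h₂ <;> try omega
  · congr 2
    · ext <;> simp only <;> omega
    · omega
  · rfl

theorem bandMatrix_twoStaircaseValue_shiftPos :
    bandMatrix (fun i => a (i + 1)) (fun j => d (j + 1)) (twoStaircaseValue a d s r x₁ x₂)
        (shiftPos s (b, u)) (shiftPos r (q, v)) =
      bandMatrix (fun b => a (s + b + 1)) (fun q => d (r + q + 1)) x₂ (b, u) (q, v) := by
  simp only [bandMatrix, twoStaircaseValue, shiftPos, Nat.add_sub_cancel_left]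
  split_ifs <;> first | omega | rfl

theorem bandMatrix_twoStaircaseValue_of_lt_of_le (hi : i < s) (hj : r ≤ j) :
    bandMatrix (fun i => a (i + 1)) (fun j => d (j + 1)) (twoStaircaseValue a d s r x₁ x₂)
      (i, u) (j, v) = 0 := by
  simp only [bandMatrix, twoStaircaseValue]
  split_ifs <;> first | omega | rfl

theorem bandMatrix_twoStaircaseValue_of_le_of_lt (hi : s ≤ i) (hj : j < r) :
    bandMatrix (fun i => a (i + 1)) (fun j => d (j + 1)) (twoStaircaseValue a d s r x₁ x₂)
      (i, u) (j, v) = 0 := by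
  simp only [bandMatrix, twoStaircaseValue]
  split_ifs <;> first | omega | rfl

theorem submatrix_bandMatrix_twoStaircaseValue {T₁ T₂ : ℕ} (row₁ col₁ : Fin T₁ → ℕ × ℕ)
    (row₂ col₂ : Fin T₂ → ℕ × ℕ) (hrow₁ : ∀ k, (row₁ k).1 < s ∧ (row₁ k).2 < a (s - (row₁ k).1))
    (hcol₁ : ∀ k, (col₁ k).1 < r ∧ (col₁ k).2 < d (r - (col₁ k).1)) :
    (bandMatrix (fun i => a (i + 1)) (fun j => d (j + 1))
        (twoStaircaseValue a d s r x₁ x₂)).submatrix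
        (Sum.elim (reflectPos a s ∘ row₁) (shiftPos s ∘ row₂))
        (Sum.elim (reflectPos d r ∘ col₁) (shiftPos r ∘ col₂)) =
      fromBlocks ((bandMatrix (fun b => a (s - b)) (fun q => d (r - q)) x₁).submatrix row₁ col₁) 0 0
        ((bandMatrix (fun b => a (s + b + 1)) (fun q => d (r + q + 1)) x₂).submatrix
          row₂ col₂) := by
  ext (k | k) (k' | k')
  · exact bandMatrix_twoStaircaseValue_reflectPos x₁ x₂ (hrow₁ k).1 (hcol₁ k').1 (hrow₁ k).2
      (hcol₁ k').2
  · exact bandMatrix_twoStaircaseValue_of_lt_of_le x₁ x₂ (by have := (hrow₁ k).1; omega)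
      (Nat.le_add_right _ _)
  · exact bandMatrix_twoStaircaseValue_of_le_of_lt x₁ x₂ (Nat.le_add_right _ _)
      (by have := (hcol₁ k').1; omega)
  · exact bandMatrix_twoStaircaseValue_shiftPos x₁ x₂

end TwoStaircases

theorem add_le_rank_genPP2 (K : Type*) [Field K] (m n : ℕ) (a d : ℕ → ℕ) (s r T₁ T₂ : ℕ)
    (hs : s ≤ m) (hr : r ≤ n)
    (h₁A : T₁ ≤ blockStart (fun b => a (s - b)) s) (h₁D : T₁ ≤ blockStart (fun q => d (r - q)) r)
    (h₁ : Fits (fun b => a (s - b)) (fun q => d (r - q)) T₁)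
    (h₂A : T₂ ≤ blockStart (fun b => a (s + b + 1)) (m - s))
    (h₂D : T₂ ≤ blockStart (fun q => d (r + q + 1)) (n - r))
    (h₂ : Fits (fun b => a (s + b + 1)) (fun q => d (r + q + 1)) T₂) :
    T₁ + T₂ ≤ (genPP2 K m n a d).rank := by
  obtain ⟨x₁, row₁, col₁, hrow₁, hcol₁, hdet₁⟩ := Staircase.exists_minor_det_eq_one h₁A h₁D h₁ K
  obtain ⟨x₂, row₂, col₂, hrow₂, hcol₂, hdet₂⟩ := Staircase.exists_minor_det_eq_one h₂A h₂D h₂ K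
  have := card_le_rank_genPP2 K m n a d (twoStaircaseValue a d s r x₁ x₂)
    (Sum.elim (reflectPos a s ∘ row₁) (shiftPos s ∘ row₂))
    (Sum.elim (reflectPos d r ∘ col₁) (shiftPos r ∘ col₂))
    (Sum.rec (fun k => reflectPos_lt hs (hrow₁ k)) (fun k => shiftPos_lt (hrow₂ k)))
    (Sum.rec (fun k => reflectPos_lt hr (hcol₁ k)) (fun k => shiftPos_lt (hcol₂ k)))
    (by
      rw [submatrix_bandMatrix_twoStaircaseValue x₁ x₂ row₁ col₁ row₂ col₂ hrow₁ hcol₁,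
        det_fromBlocks_zero₂₁, hdet₁, hdet₂, one_mul]
      exact one_ne_zero)
  simpa using this

theorem exists_lt_and_le_succ {f : ℕ → ℕ} {x y c : ℕ} (hxy : x ≤ y) (hx : f x < c)
    (hy : c ≤ f y) : ∃ k, x ≤ k ∧ k < y ∧ f k < c ∧ c ≤ f (k + 1) := by
  induction y, hxy using Nat.le_induction with
  | base => omega
  | succ y hxy ih =>
    by_cases h : f y < c
    · exact ⟨y, hxy, y.lt_succ_self, h, hy⟩
    · obtain ⟨k, hk⟩ := ih (not_lt.1 h)
      exact ⟨k, hk.1, by omega, hk.2.2⟩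

theorem le_of_antitone_of_eq_zero {f : ℕ → ℕ} {m : ℕ}
    (hmono : ∀ i j, 1 ≤ i → i ≤ j → j ≤ m → f j ≤ f i) (hzero : ∀ j, m < j → f j = 0)
    {i j : ℕ} (hi : 1 ≤ i) (hij : i ≤ j) : f j ≤ f i := by
  by_cases hj : j ≤ m
  · exact hmono i j hi hij hj
  · rw [hzero j (by omega)]
    exact Nat.zero_le _

theorem sup_filter_Icc_le (p : ℕ → Prop) [DecidablePred p] (n : ℕ) :
    ((Icc 1 n).filter p).sup id ≤ n :=
  Finset.sup_le fun _ hj => (mem_Icc.1 (mem_filter.1 hj).1).2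

theorem sup_filter_Icc_spec {p : ℕ → Prop} [DecidablePred p] {n : ℕ}
    (h : 1 ≤ ((Icc 1 n).filter p).sup id) : p (((Icc 1 n).filter p).sup id) := by
  have hne : ((Icc 1 n).filter p).Nonempty := by
    by_contra hempty
    rw [not_nonempty_iff_eq_empty.1 hempty] at h
    simp at h
  obtain ⟨j, hj, hsup⟩ := exists_mem_eq_sup _ hne id
  rw [hsup]
  exact (mem_filter.1 hj).2

structure IsStaircaseIndices (m n : ℕ) (a d r s : ℕ → ℕ) : Prop where
  a_mono : ∀ i j, 1 ≤ i → i ≤ j → j ≤ m → a j ≤ a i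
  a_zero : ∀ j, m < j → a j = 0
  d_mono : ∀ i j, 1 ≤ i → i ≤ j → j ≤ n → d j ≤ d i
  d_zero : ∀ j, n < j → d j = 0
  s_zero : s 0 = 0
  r_eq : ∀ l, 1 ≤ l → r l = ((Icc 1 n).filter (fun j => a (s (l - 1) + 1) < d j)).sup id
  s_eq : ∀ l, 1 ≤ l → s l = ((Icc 1 m).filter (fun i => d (r l + 1) ≤ a i)).sup id

def cutBound (a d r s : ℕ → ℕ) (n l : ℕ) : ℕ :=
  ∑ i ∈ Ioc 0 (s l), a i + ∑ j ∈ Ioc (r (l + 1)) n, d j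

namespace IsStaircaseIndices

variable {m n : ℕ} {a d r s : ℕ → ℕ} (h : IsStaircaseIndices m n a d r s)
include h

theorem a_anti {i j : ℕ} (hi : 1 ≤ i) (hij : i ≤ j) : a j ≤ a i :=
  le_of_antitone_of_eq_zero h.a_mono h.a_zero hi hij

theorem d_anti {i j : ℕ} (hi : 1 ≤ i) (hij : i ≤ j) : d j ≤ d i :=
  le_of_antitone_of_eq_zero h.d_mono h.d_zero hi hij

theorem s_le (l : ℕ) : s l ≤ m := by
  rcases Nat.eq_zero_or_pos l with rfl | hl
  · simp [h.s_zero]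
  · exact h.s_eq l hl ▸ sup_filter_Icc_le _ m

theorem r_le {l : ℕ} (hl : 1 ≤ l) : r l ≤ n := h.r_eq l hl ▸ sup_filter_Icc_le _ n

theorem a_lt_d_r {l : ℕ} (hl : 1 ≤ l) (hrl : 1 ≤ r l) : a (s (l - 1) + 1) < d (r l) := by
  rw [h.r_eq l hl] at hrl ⊢
  exact sup_filter_Icc_spec hrl

theorem d_le_a_s {l : ℕ} (hl : 1 ≤ l) (hsl : 1 ≤ s l) : d (r l + 1) ≤ a (s l) := by
  rw [h.s_eq l hl] at hsl ⊢
  exact sup_filter_Icc_spec hsl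

theorem s_le_s_of_r_le {k l : ℕ} (hk : 1 ≤ k) (hl : 1 ≤ l) (hkl : r k ≤ r l) : s k ≤ s l := by
  rw [h.s_eq k hk, h.s_eq l hl]
  refine sup_mono fun i hi => ?_
  simp only [mem_filter] at hi ⊢
  exact ⟨hi.1, (h.d_anti (by omega) (by omega)).trans hi.2⟩

theorem r_le_r_of_s_le {k l : ℕ} (hk : 1 ≤ k) (hl : 1 ≤ l) (hkl : s (k - 1) ≤ s (l - 1)) :
    r k ≤ r l := by
  rw [h.r_eq k hk, h.r_eq l hl]
  refine sup_mono fun j hj => ?_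
  simp only [mem_filter] at hj ⊢
  exact ⟨hj.1, (h.a_anti (by omega) (by omega)).trans_lt hj.2⟩

theorem s_mono : Monotone s := by
  suffices hstep : ∀ l, s l ≤ s (l + 1) ∧ r (l + 1) ≤ r (l + 2) from
    monotone_nat_of_le_succ fun l => (hstep l).1
  intro l
  induction l with
  | zero => exact ⟨by simp [h.s_zero], h.r_le_r_of_s_le le_rfl (by omega) (by simp [h.s_zero])⟩
  | succ l ih =>
    have hs := h.s_le_s_of_r_le (by omega) (by omega) ih.2
    exact ⟨hs, h.r_le_r_of_s_le (by omega) (by omega) hs⟩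

theorem r_mono {k l : ℕ} (hk : 1 ≤ k) (hkl : k ≤ l) : r k ≤ r l :=
  h.r_le_r_of_s_le hk (hk.trans hkl) (h.s_mono (by omega))

theorem d_le_a {K i j : ℕ} (hK : 1 ≤ K) (hi : 1 ≤ i) (his : i ≤ s K) (hj : r K < j) :
    d j ≤ a i :=
  calc d j ≤ d (r K + 1) := h.d_anti (by omega) hj
    _ ≤ a (s K) := h.d_le_a_s hK (by omega)
    _ ≤ a i := h.a_anti hi his

theorem a_lt_d {l i j : ℕ} (hi : s l < i) (hj : 1 ≤ j) (hjr : j ≤ r (l + 1)) : a i < d j :=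
  calc a i ≤ a (s l + 1) := h.a_anti (by omega) hi
    _ < d (r (l + 1)) := by simpa using h.a_lt_d_r (l := l + 1) (by omega) (by omega)
    _ ≤ d j := h.d_anti hj hjr

variable {t l₀ : ℕ} (hl₀ : l₀ < t) (hmin : ∀ k < t, cutBound a d r s n l₀ ≤ cutBound a d r s n k)
include hl₀ hmin

theorem sum_le_blockStart_reflected :
    ∑ i ∈ Ioc 0 (s l₀), a i ≤ blockStart (fun q => d (r (l₀ + 1) - q)) (r (l₀ + 1)) := by
  have hmin₀ := hmin 0 (by omega)
  simp only [cutBound, h.s_zero, Ioc_self, sum_empty, zero_add] at hmin₀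
  have hr₁ := h.r_mono le_rfl (show 1 ≤ l₀ + 1 by omega)
  have hsplit := sum_Ioc_consecutive d (Nat.zero_le _) (h.r_le (show 1 ≤ l₀ + 1 by omega))
  have hsub : ∑ j ∈ Ioc (r 1) n, d j ≤ ∑ j ∈ Ioc 0 n, d j :=
    sum_le_sum_of_subset (Ioc_subset_Ioc (by omega) le_rfl)
  rw [blockStart_sub d le_rfl, Nat.sub_self]
  omega

theorem sum_le_blockStart_shifted (htr : r t = n) :
    ∑ j ∈ Ioc (r (l₀ + 1)) n, d j ≤ blockStart (fun b => a (s l₀ + b + 1)) (m - s l₀) := by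
  have hmin' := hmin (t - 1) (by omega)
  simp only [cutBound, Nat.sub_add_cancel (show 1 ≤ t by omega), htr, Ioc_self, sum_empty,
    add_zero] at hmin'
  have hsub : ∑ i ∈ Ioc 0 (s (t - 1)), a i ≤ ∑ i ∈ Ioc 0 m, a i :=
    sum_le_sum_of_subset (Ioc_subset_Ioc le_rfl (h.s_le _))
  have hsplit := sum_Ioc_consecutive a (Nat.zero_le _) (h.s_le l₀)
  rw [blockStart_add_one, Nat.add_sub_cancel' (h.s_le l₀)]
  omega

theorem fits_reflected :
    Fits (fun b => a (s l₀ - b)) (fun q => d (r (l₀ + 1) - q)) (∑ i ∈ Ioc 0 (s l₀), a i) := by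
  intro i q hi hq hqi _
  have hρn := h.r_le (show 1 ≤ l₀ + 1 by omega)
  have hT₁ := blockStart_sub a (le_refl (s l₀))
  rw [Nat.sub_self] at hT₁
  have his : i < s l₀ := by
    by_contra! hsi
    have := blockStart_mono (fun b => a (s l₀ - b)) hsi
    omega
  have hqρ : q < r (l₀ + 1) := by
    by_contra! hrq
    have := blockStart_mono (fun q => d (r (l₀ + 1) - q)) hrq
    have := h.sum_le_blockStart_reflected hl₀ hmin
    omega
  rw [blockStart_sub a (by omega : i + 1 ≤ s l₀), blockStart_sub d hqρ.le] at hqi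
  -- the row `s l₀ - i` lies in the stair `(s K, s (K + 1)]`
  obtain ⟨K, -, hKl, hsK, hsK'⟩ := exists_lt_and_le_succ (f := s) (Nat.zero_le l₀)
    (by rw [h.s_zero]; omega : s 0 < s l₀ - i) (by omega : s l₀ - i ≤ s l₀)
  have hmK := hmin K (by omega)
  simp only [cutBound] at hmK
  have h₁ := sum_Ioc_consecutive a (Nat.zero_le (s K)) (h.s_mono hKl.le)
  have h₂ := sum_Ioc_consecutive d (h.r_mono (by omega) (show K + 1 ≤ l₀ + 1 by omega)) hρn
  have h₃ : ∑ j ∈ Ioc (s l₀ - (i + 1)) (s l₀), a j ≤ ∑ j ∈ Ioc (s K) (s l₀), a j :=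
    sum_le_sum_of_subset (Ioc_subset_Ioc (by omega) le_rfl)
  have hJ : r (K + 1) < r (l₀ + 1) - q := by
    by_contra! hJ
    have : ∑ j ∈ Ioc (r (K + 1)) (r (l₀ + 1)), d j ≤
        ∑ j ∈ Ioc (r (l₀ + 1) - q) (r (l₀ + 1)), d j :=
      sum_le_sum_of_subset (Ioc_subset_Ioc hJ le_rfl)
    omega
  exact h.d_le_a (by omega) (by omega) hsK' hJ

theorem fits_shifted (htr : r t = n) :
    Fits (fun b => a (s l₀ + b + 1)) (fun q => d (r (l₀ + 1) + q + 1))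
      (∑ j ∈ Ioc (r (l₀ + 1)) n, d j) := by
  intro i q _ hq _ hiq
  have hρn := h.r_le (show 1 ≤ l₀ + 1 by omega)
  have hqn : q < n - r (l₀ + 1) := by
    by_contra! hnq
    have := blockStart_mono (fun q => d (r (l₀ + 1) + q + 1)) hnq
    rw [blockStart_add_one, Nat.add_sub_cancel' hρn] at this
    omega
  rw [blockStart_add_one, blockStart_add_one, ← add_assoc] at hiq
  -- the column `r (l₀ + 1) + q + 1` lies in the stair `(r K, r (K + 1)]`
  obtain ⟨K, hlK, hKt, hrK, hrK'⟩ := exists_lt_and_le_succ (f := r) (show l₀ + 1 ≤ t by omega)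
    (by omega : r (l₀ + 1) < r (l₀ + 1) + q + 1) (by omega : r (l₀ + 1) + q + 1 ≤ r t)
  have hmK := hmin K hKt
  simp only [cutBound] at hmK
  have h₁ := sum_Ioc_consecutive a (Nat.zero_le (s l₀)) (h.s_mono (show l₀ ≤ K by omega))
  have h₂ := sum_Ioc_consecutive d (h.r_mono (show 1 ≤ l₀ + 1 by omega)
    (show l₀ + 1 ≤ K + 1 by omega)) (h.r_le (show 1 ≤ K + 1 by omega))
  have h₃ : ∑ j ∈ Ioc (r (l₀ + 1)) (r (l₀ + 1) + q + 1), d j ≤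
      ∑ j ∈ Ioc (r (l₀ + 1)) (r (K + 1)), d j :=
    sum_le_sum_of_subset (Ioc_subset_Ioc le_rfl hrK')
  have hI : s l₀ + i + 1 ≤ s K := by
    by_contra! hI
    have : ∑ j ∈ Ioc (s l₀) (s K), a j ≤ ∑ j ∈ Ioc (s l₀) (s l₀ + i), a j :=
      sum_le_sum_of_subset (Ioc_subset_Ioc le_rfl (by omega))
    omega
  exact h.d_le_a (by omega) (by omega) hI hrK

theorem cutBound_le_rank (htr : r t = n) (K : Type*) [Field K] :
    cutBound a d r s n l₀ ≤ (genPP2 K m n a d).rank := by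
  have hT₁ := blockStart_sub a (le_refl (s l₀))
  rw [Nat.sub_self] at hT₁
  have hT₂ := blockStart_add_one d (r (l₀ + 1)) (n - r (l₀ + 1))
  rw [Nat.add_sub_cancel' (h.r_le (show 1 ≤ l₀ + 1 by omega))] at hT₂
  exact add_le_rank_genPP2 K m n a d _ _ _ _ (h.s_le l₀) (h.r_le (by omega)) hT₁.ge
    (h.sum_le_blockStart_reflected hl₀ hmin) (h.fits_reflected hl₀ hmin)
    (h.sum_le_blockStart_shifted hl₀ hmin htr) hT₂.ge (h.fits_shifted hl₀ hmin htr)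

end IsStaircaseIndices

/-- Proposition 4: rank of the generic matrix `φ^{PP2}`.
Here `a 1 ≥ ⋯ ≥ a m ≥ 1` and `d 1 ≥ ⋯ ≥ d n ≥ 1` (extended by `0` outside), and the
indices `r l`, `s l` are defined by the recursion
`r l = max{ j ≤ n : d j > a (s (l-1) + 1) }`, `s l = max{ i ≤ m : d (r l + 1) ≤ a i }`
(undefined maxima are `0`), `t` being minimal with `r t = n`. -/
theorem rank_genPP2 (K : Type*) [Field K] (m n : ℕ) (a d : ℕ → ℕ)
    (ha_mono : ∀ i j, 1 ≤ i → i ≤ j → j ≤ m → a j ≤ a i)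
    (ha_zero : ∀ j, m < j → a j = 0)
    (hd_mono : ∀ i j, 1 ≤ i → i ≤ j → j ≤ n → d j ≤ d i)
    (hd_zero : ∀ j, n < j → d j = 0)
    (r s : ℕ → ℕ) (hs0 : s 0 = 0)
    (hr : ∀ l, 1 ≤ l → r l =
      ((Finset.Icc 1 n).filter (fun j => a (s (l - 1) + 1) < d j)).sup id)
    (hs : ∀ l, 1 ≤ l → s l =
      ((Finset.Icc 1 m).filter (fun i => d (r l + 1) ≤ a i)).sup id)
    (t : ℕ) (ht1 : 1 ≤ t) (htr : r t = n) :
    (genPP2 K m n a d).rank =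
      Finset.inf' (Finset.range t) (by simp; omega)
        (fun i => (∑ j ∈ Finset.Icc 1 (s i), a j) +
          ∑ j ∈ Finset.Icc (r (i + 1) + 1) (r t), d j) := by
  have h : IsStaircaseIndices m n a d r s := ⟨ha_mono, ha_zero, hd_mono, hd_zero, hs0, hr, hs⟩
  have hcut : (fun i => (∑ j ∈ Icc 1 (s i), a j) + ∑ j ∈ Icc (r (i + 1) + 1) (r t), d j) =
      cutBound a d r s n := by
    ext i
    simp only [cutBound, htr, ← Icc_add_one_left_eq_Ioc, zero_add]
  rw [hcut]
  refine le_antisymm (le_inf' _ _ fun l _ => ?_) ?_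
  · exact rank_genPP2_le K m n a d (h.s_le l) (h.r_le (by omega))
      fun i j hi _ hj hjr => h.a_lt_d hi hj hjr
  · obtain ⟨l₀, hl₀, hmin⟩ := exists_mem_eq_inf' ⟨0, mem_range.2 ht1⟩ (cutBound a d r s n)
    rw [hmin]
    exact h.cutBound_le_rank (mem_range.1 hl₀) (fun k hk => hmin ▸ inf'_le _ (mem_range.2 hk))
      htr K
end

section
/- Let M^P = ⊕_{i=1}^{m^P} Q_{a_i} with a_1 ≥ ... ≥ a_{m^P} and N^P = ⊕_{j=1}^{n^P} Q_{d_j} with d_1 ≥ ... ≥ d_{n^P} be preprojective Kronecker representations over an algebraically closed field. Define r_1 = max{j : d_j > a_1}, s_l = max{i : d_{r_l+1} ≤ a_i}, r_l = max{j : d_j > a_{s_{l−1}+1}}, with r_t = n^P. Then N^P embeds as a subrepresentation of M^P if and only if r_1 = 0 and for all 1 ≤ i ≤ t−1: Σ_{j=1}^{s_i} a_j ≥ Σ_{j=1}^{r_{i+1}} d_j and Σ_{j=1}^{s_i} (a_j − 1) ≥ Σ_{j=1}^{r_{i+1}} (d_j − 1). -/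
open Matrix Finset

namespace KSub

/-- prefix sums -/
def PS (f : ℕ → ℕ) (p : ℕ) : ℕ := ∑ k ∈ Finset.Icc 1 p, f k

lemma PS_zero (f : ℕ → ℕ) : PS f 0 = 0 := by simp [PS]

lemma PS_succ (f : ℕ → ℕ) (p : ℕ) : PS f (p+1) = PS f p + f (p+1) := by
  unfold PS
  rw [← Finset.sum_Icc_succ_top (by omega : 1 ≤ p+1)]

lemma PS_split (f : ℕ → ℕ) (p : ℕ) (hp : 1 ≤ p) : PS f p = PS f (p-1) + f p := by
  have := PS_succ f (p-1)
  rwa [Nat.sub_add_cancel hp] at this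

lemma PS_mono (f : ℕ → ℕ) {p q : ℕ} (h : p ≤ q) : PS f p ≤ PS f q := by
  unfold PS
  exact Finset.sum_le_sum_of_subset (Finset.Icc_subset_Icc le_rfl h)

lemma PS_stable (f : ℕ → ℕ) {m : ℕ} (hf : ∀ j, m < j → f j = 0) {k : ℕ} (hk : m ≤ k) :
    PS f k = PS f m := by
  induction k with
  | zero =>
    have : m = 0 := by omega
    simp [this]
  | succ k ih =>
    rcases Nat.lt_or_ge m (k+1) with h | h
    · have hk' : m ≤ k := by omega
      rw [PS_succ, ih hk', hf (k+1) (by omega), Nat.add_zero]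
    · have : m = k + 1 := by omega
      rw [this]

lemma PS_pos (f : ℕ → ℕ) {p : ℕ} (hp : 1 ≤ p) (h1 : 1 ≤ f 1) : 1 ≤ PS f p := by
  calc 1 ≤ f 1 := h1
  _ ≤ PS f p := Finset.single_le_sum (fun i _ => Nat.zero_le _) (by simp [Finset.mem_Icc]; omega)

/-- sum over a sigma type of fins, as iterated sum -/
lemma sum_sigma_fin {β : Type*} [AddCommMonoid β] (n : ℕ) (c : ℕ → ℕ)
    (f : (Σ j : Fin n, Fin (c (j.1+1))) → β) :
    ∑ y : (Σ j : Fin n, Fin (c (j.1+1))), f y = ∑ j : Fin n, ∑ i : Fin (c (j.1+1)), f ⟨j, i⟩ := by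
  rw [← Finset.sum_sigma]; rfl

/-- Fin-indexed sum to Icc sum -/
lemma fin_sum_Icc {β : Type*} [AddCommMonoid β] (n : ℕ) (F : ℕ → β) :
    ∑ j : Fin n, F (j.1+1) = ∑ j ∈ Finset.Icc 1 n, F j := by
  induction n with
  | zero => simp
  | succ n ih =>
    rw [Fin.sum_univ_castSucc]
    simp only [Fin.coe_castSucc, Fin.val_last]
    rw [ih, ← Finset.sum_Icc_succ_top (by omega : 1 ≤ n+1)]

/-- collapse a delta-sum over a sigma type (orientation: matrix-entry-left). -/
lemma sigma_delta_left {β : Type*} [AddCommMonoid β] (n : ℕ) (c : ℕ → ℕ)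
    (x0 : Fin n) (x1 : ℕ) (f : (Σ j : Fin n, Fin (c (j.1+1))) → β) :
    (∑ y : (Σ j : Fin n, Fin (c (j.1+1))), if x0 = y.1 ∧ x1 = (y.2:ℕ) then f y else 0)
      = if h : x1 < c (x0.1+1) then f ⟨x0, ⟨x1, h⟩⟩ else 0 := by
  classical
  rw [sum_sigma_fin]
  rw [Fintype.sum_eq_single x0 (fun b hb => by
    apply Finset.sum_eq_zero
    intro i _
    rw [if_neg]
    rintro ⟨h1, -⟩
    exact hb h1.symm)]
  by_cases h : x1 < c (x0.1+1)
  · rw [dif_pos h]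
    rw [Fintype.sum_eq_single (⟨x1, h⟩ : Fin (c (x0.1+1))) (fun b hb => by
      rw [if_neg]
      rintro ⟨-, h2⟩
      exact hb (by exact Fin.ext h2.symm))]
    rw [if_pos ⟨rfl, rfl⟩]
  · rw [dif_neg h]
    apply Finset.sum_eq_zero
    intro i _
    rw [if_neg]
    rintro ⟨-, h2⟩
    exact h (h2 ▸ i.2)

end KSub

/-- The map `α` of the preprojective Kronecker representation `⊕ᵢ Q_{a i}` (1-based
sizes `a 1, …, a m`): block diagonal with blocks `[I;0] : K^{k-1} → K^k`. -/
def QsumA (K : Type*) [Field K] (m : ℕ) (a : ℕ → ℕ) :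
    Matrix (Σ i : Fin m, Fin (a (i.1 + 1))) (Σ i : Fin m, Fin (a (i.1 + 1) - 1)) K :=
  fun x y => if x.1 = y.1 ∧ (x.2 : ℕ) = (y.2 : ℕ) then 1 else 0

/-- The map `β` of `⊕ᵢ Q_{a i}` : block diagonal with blocks `[0;I] : K^{k-1} → K^k`. -/
def QsumB (K : Type*) [Field K] (m : ℕ) (a : ℕ → ℕ) :
    Matrix (Σ i : Fin m, Fin (a (i.1 + 1))) (Σ i : Fin m, Fin (a (i.1 + 1) - 1)) K :=
  fun x y => if x.1 = y.1 ∧ (x.2 : ℕ) = (y.2 : ℕ) + 1 then 1 else 0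


namespace KSub

/-- collapse, orientation right -/
lemma sigma_delta_right {β : Type*} [AddCommMonoid β] (n : ℕ) (c : ℕ → ℕ)
    (x0 : Fin n) (x1 : ℕ) (f : (Σ j : Fin n, Fin (c (j.1+1))) → β) :
    (∑ y : (Σ j : Fin n, Fin (c (j.1+1))), if y.1 = x0 ∧ (y.2:ℕ) = x1 then f y else 0)
      = if h : x1 < c (x0.1+1) then f ⟨x0, ⟨x1, h⟩⟩ else 0 := by
  rw [← sigma_delta_left n c x0 x1 f]
  apply Finset.sum_congr rfl
  intro y _
  congr 1
  apply propext
  constructor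
  · rintro ⟨h1, h2⟩; exact ⟨h1.symm, h2.symm⟩
  · rintro ⟨h1, h2⟩; exact ⟨h1.symm, h2.symm⟩

section EntryLemmas

variable {K : Type*} [Field K]

lemma mulA_left {m : ℕ} {a : ℕ → ℕ} {C : Type*} [Fintype C]
    (M : Matrix (Σ i : Fin m, Fin (a (i.1 + 1) - 1)) C K)
    (x : Σ i : Fin m, Fin (a (i.1 + 1))) (y : C) :
    (QsumA K m a * M) x y
      = if h : (x.2:ℕ) < a (x.1.1+1) - 1 then M ⟨x.1, ⟨x.2, h⟩⟩ y else 0 := by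
  rw [Matrix.mul_apply]
  have : ∀ z : (Σ i : Fin m, Fin (a (i.1 + 1) - 1)),
      QsumA K m a x z * M z y = if x.1 = z.1 ∧ (x.2:ℕ) = (z.2:ℕ) then M z y else 0 := by
    intro z
    simp only [QsumA, ite_mul, one_mul, zero_mul]
  simp only [this]
  exact sigma_delta_left m (fun k => a k - 1) x.1 x.2 (fun z => M z y)

lemma mulB_left {m : ℕ} {a : ℕ → ℕ} {C : Type*} [Fintype C]
    (M : Matrix (Σ i : Fin m, Fin (a (i.1 + 1) - 1)) C K)
    (x : Σ i : Fin m, Fin (a (i.1 + 1))) (y : C) :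
    (QsumB K m a * M) x y
      = if h : 1 ≤ (x.2:ℕ) ∧ (x.2:ℕ) - 1 < a (x.1.1+1) - 1 then
          M ⟨x.1, ⟨(x.2:ℕ) - 1, h.2⟩⟩ y else 0 := by
  rw [Matrix.mul_apply]
  have e1 : ∀ z : (Σ i : Fin m, Fin (a (i.1 + 1) - 1)),
      QsumB K m a x z * M z y = if x.1 = z.1 ∧ (x.2:ℕ) = (z.2:ℕ) + 1 then M z y else 0 := by
    intro z
    simp only [QsumB, ite_mul, one_mul, zero_mul]
  simp only [e1]
  by_cases h1 : 1 ≤ (x.2:ℕ)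
  · have e2 : ∀ z : (Σ i : Fin m, Fin (a (i.1 + 1) - 1)),
        (if x.1 = z.1 ∧ (x.2:ℕ) = (z.2:ℕ) + 1 then M z y else 0)
          = if x.1 = z.1 ∧ (x.2:ℕ) - 1 = (z.2:ℕ) then M z y else 0 := by
      intro z
      congr 1
      apply propext
      constructor
      · rintro ⟨u, v⟩; exact ⟨u, by omega⟩
      · rintro ⟨u, v⟩; exact ⟨u, by omega⟩
    simp only [e2]
    rw [sigma_delta_left m (fun k => a k - 1) x.1 ((x.2:ℕ) - 1) (fun z => M z y)]
    by_cases h2 : (x.2:ℕ) - 1 < a (x.1.1+1) - 1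
    · rw [dif_pos h2, dif_pos ⟨h1, h2⟩]
    · rw [dif_neg h2, dif_neg (by tauto)]
  · rw [dif_neg (by tauto)]
    apply Finset.sum_eq_zero
    intro z _
    rw [if_neg]
    rintro ⟨-, v⟩
    omega

lemma mulA_right {n : ℕ} {d : ℕ → ℕ} {R : Type*}
    (M : Matrix R (Σ j : Fin n, Fin (d (j.1 + 1))) K)
    (x : R) (y : Σ j : Fin n, Fin (d (j.1 + 1) - 1)) :
    (M * QsumA K n d) x y
      = M x ⟨y.1, ⟨y.2, by have := y.2.2; omega⟩⟩ := by
  rw [Matrix.mul_apply]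
  have e1 : ∀ z : (Σ j : Fin n, Fin (d (j.1 + 1))),
      M x z * QsumA K n d z y = if z.1 = y.1 ∧ (z.2:ℕ) = (y.2:ℕ) then M x z else 0 := by
    intro z
    simp only [QsumA, mul_ite, mul_one, mul_zero]
  simp only [e1]
  rw [sigma_delta_right n d y.1 (y.2:ℕ) (fun z => M x z)]
  rw [dif_pos (by have := y.2.2; omega)]

lemma mulB_right {n : ℕ} {d : ℕ → ℕ} {R : Type*}
    (M : Matrix R (Σ j : Fin n, Fin (d (j.1 + 1))) K)
    (x : R) (y : Σ j : Fin n, Fin (d (j.1 + 1) - 1)) :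
    (M * QsumB K n d) x y
      = M x ⟨y.1, ⟨(y.2:ℕ) + 1, by have := y.2.2; omega⟩⟩ := by
  rw [Matrix.mul_apply]
  have e1 : ∀ z : (Σ j : Fin n, Fin (d (j.1 + 1))),
      M x z * QsumB K n d z y = if z.1 = y.1 ∧ (z.2:ℕ) = (y.2:ℕ) + 1 then M x z else 0 := by
    intro z
    simp only [QsumB, mul_ite, mul_one, mul_zero]
  simp only [e1]
  rw [sigma_delta_right n d y.1 ((y.2:ℕ) + 1) (fun z => M x z)]
  rw [dif_pos (by have := y.2.2; omega)]

/-- the canonical `[I;0]`-block map is injective. -/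
lemma QA_inj (n : ℕ) (d : ℕ → ℕ) : Function.Injective (QsumA K n d).mulVecLin := by
  have key : ∀ w, (QsumA K n d).mulVecLin w = 0 → w = 0 := by
    intro w hw
    funext y
    have hx := congrFun hw ⟨y.1, ⟨(y.2:ℕ), by have := y.2.2; omega⟩⟩
    rw [Matrix.mulVecLin_apply, Matrix.mulVec, Pi.zero_apply] at hx
    have e1 : ∀ z : (Σ j : Fin n, Fin (d (j.1 + 1) - 1)),
        QsumA K n d ⟨y.1, ⟨(y.2:ℕ), by have := y.2.2; omega⟩⟩ z * w z
          = if (⟨y.1, ⟨(y.2:ℕ), by have := y.2.2; omega⟩⟩ :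
              (Σ j : Fin n, Fin (d (j.1 + 1)))).1 = z.1 ∧ ((y.2:ℕ) : ℕ) = (z.2:ℕ)
            then w z else 0 := by
      intro z
      simp only [QsumA, ite_mul, one_mul, zero_mul]
    rw [dotProduct] at hx
    simp only [e1] at hx
    rw [sigma_delta_left n (fun k => d k - 1) y.1 (y.2:ℕ) (fun z => w z)] at hx
    rw [dif_pos (by have := y.2.2; omega)] at hx
    rw [Pi.zero_apply]
    rw [← hx]
  intro v w hvw
  have := key (v - w) (by rw [map_sub, hvw, sub_self])
  exact sub_eq_zero.mp this

end EntryLemmas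

end KSub

namespace KSub

section HomZero

variable {K : Type*} [Field K] {m n : ℕ} {a d : ℕ → ℕ}

/-- If `d j > a k`, the `(k,j)` blocks of any intertwiner `(ψ, φ)` vanish. -/
lemma homzero (ψ : Matrix (Σ i : Fin m, Fin (a (i.1 + 1))) (Σ j : Fin n, Fin (d (j.1 + 1))) K)
    (φ : Matrix (Σ i : Fin m, Fin (a (i.1 + 1) - 1)) (Σ j : Fin n, Fin (d (j.1 + 1) - 1)) K)
    (hA : QsumA K m a * φ = ψ * QsumA K n d) (hB : QsumB K m a * φ = ψ * QsumB K n d)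
    (k0 : Fin m) (j0 : Fin n) (had : a (k0.1 + 1) < d (j0.1 + 1)) :
    (∀ (e : Fin (a (k0.1 + 1))) (i : Fin (d (j0.1 + 1))), ψ ⟨k0, e⟩ ⟨j0, i⟩ = 0)
    ∧ (∀ (e : Fin (a (k0.1 + 1) - 1)) (i : Fin (d (j0.1 + 1) - 1)), φ ⟨k0, e⟩ ⟨j0, i⟩ = 0) := by
  classical
  set ak := a (k0.1 + 1) with hak
  set dj := d (j0.1 + 1) with hdj
  let Ψ : ℕ → ℕ → K := fun e i =>
    if h : e < ak ∧ i < dj then ψ ⟨k0, ⟨e, h.1⟩⟩ ⟨j0, ⟨i, h.2⟩⟩ else 0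
  have hΨap : ∀ (e i : ℕ) (h : e < ak ∧ i < dj),
      Ψ e i = ψ ⟨k0, ⟨e, h.1⟩⟩ ⟨j0, ⟨i, h.2⟩⟩ := fun e i h => dif_pos h
  have hΨno : ∀ (e i : ℕ), ¬(e < ak ∧ i < dj) → Ψ e i = 0 := fun e i h => dif_neg h
  -- entrywise relations
  have EA : ∀ (e : ℕ) (he : e < ak) (i : ℕ) (hi : i < dj - 1),
      (if h : e < ak - 1 then φ ⟨k0, ⟨e, h⟩⟩ ⟨j0, ⟨i, hi⟩⟩ else 0) = Ψ e i := by
    intro e he i hi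
    have h1 := congrFun (congrFun hA ⟨k0, ⟨e, he⟩⟩) ⟨j0, ⟨i, hi⟩⟩
    rw [mulA_left, mulA_right] at h1
    rw [h1, hΨap e i ⟨he, by omega⟩]
  have EB : ∀ (e : ℕ) (he : e < ak) (i : ℕ) (hi : i < dj - 1),
      (if h : 1 ≤ e ∧ e - 1 < ak - 1 then φ ⟨k0, ⟨e - 1, h.2⟩⟩ ⟨j0, ⟨i, hi⟩⟩ else 0)
        = Ψ e (i + 1) := by
    intro e he i hi
    have h1 := congrFun (congrFun hB ⟨k0, ⟨e, he⟩⟩) ⟨j0, ⟨i, hi⟩⟩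
    rw [mulB_left, mulB_right] at h1
    rw [h1, hΨap e (i+1) ⟨he, by omega⟩]
  have R1 : ∀ i : ℕ, i < dj - 1 → Ψ (ak - 1) i = 0 := by
    intro i hi
    rcases Nat.eq_zero_or_pos ak with h0 | h0
    · exact hΨno _ _ (by omega)
    · rw [← EA (ak - 1) (by omega) i hi, dif_neg (by omega)]
  have R2 : ∀ e i : ℕ, 1 ≤ e → e < ak → i < dj - 1 → Ψ e (i + 1) = Ψ (e - 1) i := by
    intro e i he1 he2 hi
    rw [← EB e he2 i hi, dif_pos ⟨he1, by omega⟩]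
    rw [← EA (e - 1) (by omega) i hi, dif_pos (by omega)]
  have R3 : ∀ i : ℕ, i < dj - 1 → Ψ 0 (i + 1) = 0 := by
    intro i hi
    rcases Nat.eq_zero_or_pos ak with h0 | h0
    · exact hΨno _ _ (by omega)
    · rw [← EB 0 (by omega) i hi, dif_neg (by omega)]
  have chain : ∀ (l e : ℕ), e + l ≤ ak - 1 → Ψ e 0 = Ψ (e + l) l := by
    intro l
    induction l with
    | zero => intro e _; rfl
    | succ l ih =>
      intro e h
      rw [ih e (by omega)]
      have := R2 (e + l + 1) l (by omega) (by omega) (by omega)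
      rw [show e + l + 1 - 1 = e + l by omega] at this
      rw [show e + (l+1) = e + l + 1 by omega, this]
  have U : ∀ e : ℕ, e < ak → Ψ e 0 = 0 := by
    intro e he
    have h1 : e + (ak - 1 - e) = ak - 1 := by omega
    rw [chain (ak - 1 - e) e (by omega), h1]
    exact R1 _ (by omega)
  have V : ∀ (i e : ℕ), e < ak → i < dj → Ψ e i = 0 := by
    intro i
    induction i with
    | zero => intro e he _; exact U e he
    | succ i ih =>
      intro e he hi
      rcases Nat.eq_zero_or_pos e with h0 | h0
      · rw [h0]; exact R3 i (by omega)
      · rw [R2 e i (by omega) he (by omega)]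
        exact ih (e - 1) (by omega) (by omega)
  constructor
  · intro e i
    have := V i.1 e.1 e.2 i.2
    rw [hΨap e.1 i.1 ⟨e.2, i.2⟩] at this
    simpa using this
  · intro e i
    have h2 : (e:ℕ) < ak := by have := e.2; omega
    have := EA e.1 h2 i.1 i.2
    rw [dif_pos e.2] at this
    have hv := V i.1 e.1 h2 (by have := i.2; omega)
    rw [show (⟨k0, ⟨(e:ℕ), e.2⟩⟩ : Σ i : Fin m, Fin (a (i.1 + 1) - 1)) = ⟨k0, e⟩ by simp,
        show (⟨j0, ⟨(i:ℕ), i.2⟩⟩ : Σ j : Fin n, Fin (d (j.1 + 1) - 1)) = ⟨j0, i⟩ by simp] at this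
    rw [this]
    exact hv

end HomZero

end KSub

namespace KSub

section Restrict

variable {K : Type*} [Field K]

lemma sum_restrict {β : Type*} [AddCommMonoid β] {q n : ℕ} (hq : q ≤ n) (c : ℕ → ℕ)
    (F : (Σ j : Fin n, Fin (c (j.1 + 1))) → β)
    (hF : ∀ y : (Σ j : Fin n, Fin (c (j.1 + 1))), q ≤ y.1.1 → F y = 0) :
    ∑ y, F y
      = ∑ y' : (Σ j : Fin q, Fin (c (j.1 + 1))),
          F ⟨⟨y'.1.1, lt_of_lt_of_le y'.1.2 hq⟩, y'.2⟩ := by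
  classical
  rw [sum_sigma_fin, sum_sigma_fin]
  let f : ℕ → β := fun x => if h : x < n then ∑ i : Fin (c (x + 1)), F ⟨⟨x, h⟩, i⟩ else 0
  have hL : ∀ j : Fin n, (∑ i : Fin (c (j.1 + 1)), F ⟨j, i⟩) = f j.1 := by
    intro j
    show _ = f j.1
    unfold f
    beta_reduce
    rw [dif_pos j.2]
  have hR : ∀ j' : Fin q, (∑ i : Fin (c (j'.1 + 1)),
      F ⟨⟨j'.1, lt_of_lt_of_le j'.2 hq⟩, i⟩) = f j'.1 := by
    intro j'
    show _ = f j'.1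
    unfold f
    beta_reduce
    rw [dif_pos (lt_of_lt_of_le j'.2 hq)]
  calc ∑ j : Fin n, ∑ i : Fin (c (j.1 + 1)), F ⟨j, i⟩
      = ∑ j : Fin n, f j.1 := by
        apply Finset.sum_congr rfl; intro j _; exact hL j
    _ = ∑ j ∈ Finset.range n, f j := Fin.sum_univ_eq_sum_range f n
    _ = ∑ j ∈ Finset.range q, f j := by
        symm
        apply Finset.sum_subset (Finset.range_subset_range.mpr hq)
        intro x _ hx
        rw [Finset.mem_range] at hx
        push_neg at hx
        show f x = 0
        unfold f
        by_cases h : x < n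
        · refine (dif_pos h).trans ?_
          apply Finset.sum_eq_zero
          intro i _
          exact hF _ (by simpa using hx)
        · exact dif_neg h
    _ = ∑ j' : Fin q, f j'.1 := (Fin.sum_univ_eq_sum_range f q).symm
    _ = ∑ j' : Fin q, ∑ i : Fin (c (j'.1 + 1)),
          F ⟨⟨j'.1, lt_of_lt_of_le j'.2 hq⟩, i⟩ := by
        apply Finset.sum_congr rfl; intro j' _; exact (hR j').symm

lemma card_le_of_restricted_inj {p q m n : ℕ} (hp : p ≤ m) (hq : q ≤ n) (c e : ℕ → ℕ)
    (ψ : Matrix (Σ i : Fin m, Fin (e (i.1 + 1))) (Σ j : Fin n, Fin (c (j.1 + 1))) K)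
    (hinj : Function.Injective ψ.mulVecLin)
    (hzero : ∀ (x : Σ i : Fin m, Fin (e (i.1 + 1))) (y : Σ j : Fin n, Fin (c (j.1 + 1))),
      p ≤ x.1.1 → y.1.1 < q → ψ x y = 0) :
    PS c q ≤ PS e p := by
  classical
  let ψ' : Matrix (Σ i : Fin p, Fin (e (i.1 + 1))) (Σ j : Fin q, Fin (c (j.1 + 1))) K :=
    fun x y => ψ ⟨⟨x.1.1, lt_of_lt_of_le x.1.2 hp⟩, x.2⟩ ⟨⟨y.1.1, lt_of_lt_of_le y.1.2 hq⟩, y.2⟩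
  have key : ∀ v', ψ'.mulVecLin v' = 0 → v' = 0 := by
    intro v' hv'
    let v : (Σ j : Fin n, Fin (c (j.1 + 1))) → K :=
      fun y => if h : y.1.1 < q then v' ⟨⟨y.1.1, h⟩, y.2⟩ else 0
    have hvemb : ∀ y' : (Σ j : Fin q, Fin (c (j.1 + 1))),
        v ⟨⟨y'.1.1, lt_of_lt_of_le y'.1.2 hq⟩, y'.2⟩ = v' y' := by
      intro y'
      show v _ = v' y'
      unfold v
      exact dif_pos y'.1.2
    have hψv : ψ.mulVecLin v = 0 := by
      funext x
      rw [Matrix.mulVecLin_apply, Matrix.mulVec, dotProduct, Pi.zero_apply]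
      by_cases hx : x.1.1 < p
      · rw [sum_restrict hq c (fun y => ψ x y * v y) (fun y hy => by
          show ψ x y * v y = 0
          have hvy : v y = 0 := by unfold v; exact dif_neg (by omega)
          rw [hvy, mul_zero])]
        have : ∀ y' : (Σ j : Fin q, Fin (c (j.1 + 1))),
            ψ x ⟨⟨y'.1.1, lt_of_lt_of_le y'.1.2 hq⟩, y'.2⟩
              * v ⟨⟨y'.1.1, lt_of_lt_of_le y'.1.2 hq⟩, y'.2⟩
            = ψ' ⟨⟨x.1.1, hx⟩, x.2⟩ y' * v' y' := by
          intro y'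
          rw [hvemb y']
        rw [Finset.sum_congr rfl (fun y' _ => this y')]
        have h2 := congrFun hv' ⟨⟨x.1.1, hx⟩, x.2⟩
        simpa [Matrix.mulVecLin_apply, Matrix.mulVec, dotProduct] using h2
      · apply Finset.sum_eq_zero
        intro y _
        show ψ x y * v y = 0
        by_cases hy : y.1.1 < q
        · rw [hzero x y (by omega) hy, zero_mul]
        · have hvy : v y = 0 := by unfold v; exact dif_neg hy
          rw [hvy, mul_zero]
    have hv0 : v = 0 := hinj (by rw [hψv, map_zero])
    funext y'
    rw [← hvemb y', hv0]
    rfl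
  have hinj' : Function.Injective ψ'.mulVecLin := by
    intro v w hvw
    have := key (v - w) (by rw [map_sub, hvw, sub_self])
    exact sub_eq_zero.mp this
  have hfr := LinearMap.finrank_le_finrank_of_injective hinj'
  rw [Module.finrank_pi, Module.finrank_pi, Fintype.card_sigma, Fintype.card_sigma] at hfr
  simp only [Fintype.card_fin] at hfr
  rw [fin_sum_Icc q c, fin_sum_Icc p e] at hfr
  exact hfr

/-- The necessity dimension count. -/
lemma necessity {m n : ℕ} {a d : ℕ → ℕ}
    (ψ : Matrix (Σ i : Fin m, Fin (a (i.1 + 1))) (Σ j : Fin n, Fin (d (j.1 + 1))) K)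
    (φ : Matrix (Σ i : Fin m, Fin (a (i.1 + 1) - 1)) (Σ j : Fin n, Fin (d (j.1 + 1) - 1)) K)
    (hψ : Function.Injective ψ.mulVecLin) (hφ : Function.Injective φ.mulVecLin)
    (hA : QsumA K m a * φ = ψ * QsumA K n d) (hB : QsumB K m a * φ = ψ * QsumB K n d)
    (p q : ℕ) (hp : p ≤ m) (hq : q ≤ n)
    (hbig : ∀ k j, p < k → k ≤ m → 1 ≤ j → j ≤ q → a k < d j) :
    PS d q ≤ PS a p ∧ PS (fun x => d x - 1) q ≤ PS (fun x => a x - 1) p := by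
  constructor
  · apply card_le_of_restricted_inj hp hq d a ψ hψ
    intro x y hx hy
    have had : a (x.1.1 + 1) < d (y.1.1 + 1) :=
      hbig (x.1.1 + 1) (y.1.1 + 1) (by omega) (by have := x.1.2; omega) (by omega) (by omega)
    have := (homzero ψ φ hA hB x.1 y.1 had).1 x.2 y.2
    simpa using this
  · apply card_le_of_restricted_inj hp hq (fun x => d x - 1) (fun x => a x - 1) φ hφ
    intro x y hx hy
    have had : a (x.1.1 + 1) < d (y.1.1 + 1) :=
      hbig (x.1.1 + 1) (y.1.1 + 1) (by omega) (by have := x.1.2; omega) (by omega) (by omega)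
    have := (homzero ψ φ hA hB x.1 y.1 had).2 x.2 y.2
    simpa using this

end Restrict

end KSub

namespace KSub

section Comb

lemma filter_prefix {N : ℕ} (P : ℕ → Prop) [DecidablePred P]
    (hdc : ∀ i j, 1 ≤ i → i ≤ j → j ≤ N → P j → P i) :
    (Finset.Icc 1 N).filter P = Finset.Icc 1 (((Finset.Icc 1 N).filter P).card) := by
  apply Finset.eq_of_subset_of_card_le
  · intro x hx
    rw [Finset.mem_filter, Finset.mem_Icc] at hx
    have hsub : Finset.Icc 1 x ⊆ (Finset.Icc 1 N).filter P := by
      intro y hy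
      rw [Finset.mem_Icc] at hy
      rw [Finset.mem_filter, Finset.mem_Icc]
      exact ⟨⟨hy.1, by omega⟩, hdc y x hy.1 hy.2 hx.1.2 hx.2⟩
    have := Finset.card_le_card hsub
    rw [Nat.card_Icc] at this
    rw [Finset.mem_Icc]
    omega
  · rw [Nat.card_Icc]
    omega

lemma prefix_of_sup {N : ℕ} (P : ℕ → Prop) [DecidablePred P]
    (hdc : ∀ i j, 1 ≤ i → i ≤ j → j ≤ N → P j → P i) (j : ℕ) (h1 : 1 ≤ j)
    (h2 : j ≤ ((Finset.Icc 1 N).filter P).sup id) : P j := by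
  set S := (Finset.Icc 1 N).filter P with hS
  have hsc : S = Finset.Icc 1 S.card := filter_prefix P hdc
  have hsup : S.sup id ≤ S.card := by
    apply Finset.sup_le
    intro x hx
    rw [hsc, Finset.mem_Icc] at hx
    exact hx.2
  have hj : j ∈ S := by
    rw [hsc, Finset.mem_Icc]
    omega
  rw [hS, Finset.mem_filter] at hj
  exact hj.2

lemma sup_le_of_mem_le {N : ℕ} (P : ℕ → Prop) [DecidablePred P] (b : ℕ)
    (h : ∀ x, 1 ≤ x → x ≤ N → P x → x ≤ b) :
    ((Finset.Icc 1 N).filter P).sup id ≤ b := by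
  apply Finset.sup_le
  intro x hx
  rw [Finset.mem_filter, Finset.mem_Icc] at hx
  exact h x hx.1.1 hx.1.2 hx.2

end Comb

section SnakeDefs

/-- 0-based placement position of column `c` in row `k0` -/
def spos (a d : ℕ → ℕ) (k0 c : ℕ) : ℕ :=
  if PS d (c+1) ≤ PS a (k0+1) then PS d c - PS a k0 else a (k0+1) - d (c+1)

/-- 0-based activity: the strip interval of column `c` meets row `k0`. -/
def sact (a d : ℕ → ℕ) (k0 c : ℕ) : Prop :=
  PS a k0 < PS d (c+1) ∧ PS d c < PS a (k0+1)

instance (a d : ℕ → ℕ) (k0 c : ℕ) : Decidable (sact a d k0 c) :=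
  inferInstanceAs (Decidable (_ ∧ _))

def spsi (K : Type*) [Field K] (m n : ℕ) (a d : ℕ → ℕ) :
    Matrix (Σ i : Fin m, Fin (a (i.1 + 1))) (Σ j : Fin n, Fin (d (j.1 + 1))) K :=
  fun x y => if sact a d x.1.1 y.1.1 ∧ (x.2:ℕ) = spos a d x.1.1 y.1.1 + (y.2:ℕ) then 1 else 0

def sphi (K : Type*) [Field K] (m n : ℕ) (a d : ℕ → ℕ) :
    Matrix (Σ i : Fin m, Fin (a (i.1 + 1) - 1)) (Σ j : Fin n, Fin (d (j.1 + 1) - 1)) K :=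
  fun x y => if sact a d x.1.1 y.1.1 ∧ (x.2:ℕ) = spos a d x.1.1 y.1.1 + (y.2:ℕ) then 1 else 0

end SnakeDefs

section SnakeFacts

variable {m n : ℕ} {a d : ℕ → ℕ}

/-- abbreviation for the family of cut inequalities -/
def Fam1 (m n : ℕ) (a d : ℕ → ℕ) : Prop :=
  ∀ p q0, q0 ≤ n → (∀ j, 1 ≤ j → j ≤ q0 → a (p+1) < d j) → PS d q0 ≤ PS a p

lemma hDA (hd_pos : ∀ j, 1 ≤ j → j ≤ n → 1 ≤ d j) (ha_zero : ∀ k, m < k → a k = 0)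
    (hfam : Fam1 m n a d) : PS d n ≤ PS a m := by
  apply hfam m n le_rfl
  intro j h1 h2
  rw [ha_zero (m+1) (by omega)]
  exact hd_pos j h1 h2

lemma dj_le_ak (hd_mono : ∀ i j, 1 ≤ i → i ≤ j → j ≤ n → d j ≤ d i)
    (hfam : Fam1 m n a d) {k0 c : ℕ} (hc : c < n) (h : PS a k0 < PS d (c+1)) :
    d (c+1) ≤ a (k0+1) := by
  by_contra hcon
  push_neg at hcon
  have := hfam k0 (c+1) (by omega) (fun j h1 h2 => by
    have := hd_mono j (c+1) h1 h2 (by omega)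
    omega)
  omega

lemma row_lt_m (hd_pos : ∀ j, 1 ≤ j → j ≤ n → 1 ≤ d j) (ha_zero : ∀ k, m < k → a k = 0)
    (hfam : Fam1 m n a d) {k0 c : ℕ} (hc : c < n) (h : PS a (k0+1) < PS d (c+1)) :
    k0 + 1 ≤ m := by
  by_contra hcon
  push_neg at hcon
  have h1 : PS a (k0+1) = PS a m := PS_stable a ha_zero (by omega)
  have h2 : PS d (c+1) ≤ PS d n := PS_mono d (by omega)
  have h3 := hDA hd_pos ha_zero hfam
  omega

lemma spos_add_le (hd_mono : ∀ i j, 1 ≤ i → i ≤ j → j ≤ n → d j ≤ d i)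
    (hfam : Fam1 m n a d) {k0 c : ℕ} (hc : c < n) (hact : sact a d k0 c) :
    spos a d k0 c + d (c+1) ≤ a (k0+1) := by
  obtain ⟨h1, h2⟩ := hact
  have hdj : d (c+1) ≤ a (k0+1) := dj_le_ak hd_mono hfam hc h1
  have hD : PS d (c+1) = PS d c + d (c+1) := PS_succ d c
  have hA : PS a (k0+1) = PS a k0 + a (k0+1) := PS_succ a k0
  unfold spos
  by_cases h : PS d (c+1) ≤ PS a (k0+1)
  · rw [if_pos h]; omega
  · rw [if_neg h]; omega

end SnakeFacts

end KSub

namespace KSub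

section Snake

variable {K : Type*} [Field K] {m n : ℕ} {a d : ℕ → ℕ}

lemma snakeA (hd_mono : ∀ i j, 1 ≤ i → i ≤ j → j ≤ n → d j ≤ d i) (hfam : Fam1 m n a d) :
    QsumA K m a * sphi K m n a d = spsi K m n a d * QsumA K n d := by
  ext x y
  rw [mulA_left, mulA_right]
  by_cases h : (x.2:ℕ) < a (x.1.1+1) - 1
  · rw [dif_pos h]
    rfl
  · rw [dif_neg h]
    symm
    show (if sact a d x.1.1 y.1.1 ∧ (x.2:ℕ) = spos a d x.1.1 y.1.1 + (y.2:ℕ) then (1:K) else 0) = 0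
    apply if_neg
    rintro ⟨hact, heq⟩
    have hy2 := y.2.2
    have hx2 := x.2.2
    have hpos := spos_add_le hd_mono hfam y.1.2 hact
    omega

lemma snakeB (hd_mono : ∀ i j, 1 ≤ i → i ≤ j → j ≤ n → d j ≤ d i) (hfam : Fam1 m n a d) :
    QsumB K m a * sphi K m n a d = spsi K m n a d * QsumB K n d := by
  ext x y
  rw [mulB_left, mulB_right]
  have hx2 := x.2.2
  by_cases h : 1 ≤ (x.2:ℕ) ∧ (x.2:ℕ) - 1 < a (x.1.1+1) - 1
  · rw [dif_pos h]
    show (if sact a d x.1.1 y.1.1 ∧ (x.2:ℕ) - 1 = spos a d x.1.1 y.1.1 + (y.2:ℕ) then (1:K) else 0)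
      = (if sact a d x.1.1 y.1.1 ∧ (x.2:ℕ) = spos a d x.1.1 y.1.1 + ((y.2:ℕ) + 1) then (1:K) else 0)
    have hcond : (sact a d x.1.1 y.1.1 ∧ (x.2:ℕ) - 1 = spos a d x.1.1 y.1.1 + (y.2:ℕ))
        ↔ (sact a d x.1.1 y.1.1 ∧ (x.2:ℕ) = spos a d x.1.1 y.1.1 + ((y.2:ℕ) + 1)) := by
      constructor
      · rintro ⟨u, hv⟩; exact ⟨u, by omega⟩
      · rintro ⟨u, hv⟩; exact ⟨u, by omega⟩
    exact if_congr hcond rfl rfl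
  · rw [dif_neg h]
    symm
    show (if sact a d x.1.1 y.1.1 ∧ (x.2:ℕ) = spos a d x.1.1 y.1.1 + ((y.2:ℕ) + 1) then (1:K) else 0) = 0
    apply if_neg
    rintro ⟨hact, heq⟩
    omega

theorem spsi_inj (hd_pos : ∀ j, 1 ≤ j → j ≤ n → 1 ≤ d j)
    (hd_mono : ∀ i j, 1 ≤ i → i ≤ j → j ≤ n → d j ≤ d i)
    (ha_zero : ∀ k, m < k → a k = 0)
    (hfam : Fam1 m n a d) :
    Function.Injective (spsi K m n a d).mulVecLin := by
  have key : ∀ v, (spsi K m n a d).mulVecLin v = 0 → v = 0 := by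
    intro v hv
    let G : ℕ → ℕ → K := fun c i =>
      if h : c < n ∧ i < d (c+1) then v ⟨⟨c, h.1⟩, ⟨i, h.2⟩⟩ else 0
    have hGdef : ∀ (j0 : Fin n) (i0 : Fin (d (j0.1+1))), G j0.1 i0.1 = v ⟨j0, i0⟩ := by
      intro j0 i0
      show dite _ _ _ = _
      rw [dif_pos ⟨j0.2, i0.2⟩]
    -- the kernel equations, one for each row cell
    have KER : ∀ k0 e, k0 < m → (he : e < a (k0+1)) →
        ∑ c ∈ Finset.range n,
          (if sact a d k0 c ∧ spos a d k0 c ≤ e ∧ e < spos a d k0 c + d (c+1)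
            then G c (e - spos a d k0 c) else 0) = 0 := by
      intro k0 e hk0 he
      have hx := congrFun hv ⟨⟨k0, hk0⟩, ⟨e, he⟩⟩
      rw [Matrix.mulVecLin_apply, Matrix.mulVec, dotProduct, Pi.zero_apply] at hx
      refine Eq.trans ?_ hx
      rw [sum_sigma_fin n d (fun y => spsi K m n a d ⟨⟨k0, hk0⟩, ⟨e, he⟩⟩ y * v y)]
      rw [← Fin.sum_univ_eq_sum_range (fun c =>
        (if sact a d k0 c ∧ spos a d k0 c ≤ e ∧ e < spos a d k0 c + d (c+1)
          then G c (e - spos a d k0 c) else 0)) n]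
      apply Finset.sum_congr rfl
      intro j0 _
      have hterm : ∀ i0 : Fin (d (j0.1+1)),
          spsi K m n a d ⟨⟨k0, hk0⟩, ⟨e, he⟩⟩ ⟨j0, i0⟩ * v ⟨j0, i0⟩
          = if sact a d k0 j0.1 ∧ e = spos a d k0 j0.1 + (i0:ℕ) then v ⟨j0, i0⟩ else 0 := by
        intro i0
        have hrfl : spsi K m n a d ⟨⟨k0, hk0⟩, ⟨e, he⟩⟩ ⟨j0, i0⟩
            = if sact a d k0 j0.1 ∧ e = spos a d k0 j0.1 + (i0:ℕ) then (1:K) else 0 := rfl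
        rw [hrfl, ite_mul, one_mul, zero_mul]
      rw [Finset.sum_congr rfl (fun i0 _ => hterm i0)]
      by_cases hcA : sact a d k0 j0.1
      · by_cases hcR : spos a d k0 j0.1 ≤ e ∧ e < spos a d k0 j0.1 + d (j0.1+1)
        · rw [if_pos ⟨hcA, hcR.1, hcR.2⟩]
          symm
          rw [Finset.sum_eq_single_of_mem
            (⟨e - spos a d k0 j0.1, by omega⟩ : Fin (d (j0.1+1))) (Finset.mem_univ _)
            (fun b _ hbne => by
              rw [if_neg]
              rintro ⟨-, hbeq⟩
              apply hbne
              apply Fin.ext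
              show (b:ℕ) = e - spos a d k0 j0.1
              omega)]
          rw [if_pos ⟨hcA, by exact (Nat.add_sub_cancel' hcR.1).symm⟩]
          exact (hGdef j0 ⟨e - spos a d k0 j0.1, by omega⟩).symm
        · rw [if_neg (by tauto)]
          symm
          apply Finset.sum_eq_zero
          intro i0 _
          rw [if_neg]
          rintro ⟨-, hbeq⟩
          have hi02 := i0.2
          exact hcR ⟨by omega, by omega⟩
      · rw [if_neg (by tauto)]
        symm
        apply Finset.sum_eq_zero
        intro i0 _
        rw [if_neg]
        rintro ⟨hcc, -⟩
        exact hcA hcc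
    -- Phase 1 : top coefficients of upper-crossers vanish (induction on the upper row)
    have S1 : ∀ k0 c, c < n → PS d c < PS a (k0+1) → PS a (k0+1) < PS d (c+1) →
        ∀ i, i < d (c+1) → PS d (c+1) - PS a (k0+1) ≤ i → G c i = 0 := by
      intro k0
      induction k0 using Nat.strong_induction_on with
      | _ k0 IH =>
      intro c hc hlt hgt i hi ho
      have hDc : PS d (c+1) = PS d c + d (c+1) := PS_succ d c
      have hAk : PS a (k0+1) = PS a k0 + a (k0+1) := PS_succ a k0
      have hakm : PS a k0 ≤ PS a (k0+1) := PS_mono a (by omega)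
      have hdj : d (c+1) ≤ a (k0+1) := dj_le_ak hd_mono hfam hc (by omega)
      have hk0m : k0 < m := by
        have := row_lt_m hd_pos ha_zero hfam hc hgt
        omega
      set e := (a (k0+1) - d (c+1)) + i with he_def
      have he : e < a (k0+1) := by omega
      have hothers : ∀ b ∈ Finset.range n, b ≠ c →
          (if sact a d k0 b ∧ spos a d k0 b ≤ e ∧ e < spos a d k0 b + d (b+1)
            then G b (e - spos a d k0 b) else 0) = 0 := by
        intro b hb hbc
        rw [Finset.mem_range] at hb
        by_cases hcond : sact a d k0 b ∧ spos a d k0 b ≤ e ∧ e < spos a d k0 b + d (b+1)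
        · obtain ⟨⟨hb1, hb2⟩, hr1, hr2⟩ := hcond
          have hDb : PS d (b+1) = PS d b + d (b+1) := PS_succ d b
          by_cases hupper : PS a (k0+1) < PS d (b+1)
          · -- second upper-crosser: impossible
            exfalso
            rcases Nat.lt_or_ge b c with hlt' | hge
            · have : PS d (b+1) ≤ PS d c := PS_mono d (by omega)
              omega
            · have hgt' : c < b := by omega
              have : PS d (c+1) ≤ PS d b := PS_mono d (by omega)
              omega
          · push_neg at hupper
            have hposb : spos a d k0 b = PS d b - PS a k0 := by
              unfold spos; rw [if_pos hupper]
            have hblt : b < c := by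
              rcases Nat.lt_or_ge b c with h' | h'
              · exact h'
              · exfalso
                have : PS d (c+1) ≤ PS d b := PS_mono d (by omega)
                omega
            have hb1c : PS d (b+1) ≤ PS d c := PS_mono d (by omega)
            rw [hposb] at hr1 hr2
            by_cases hlower : PS d b < PS a k0
            · -- lower-crosser : use the IH (its seam is one row up)
              have hk01 : 1 ≤ k0 := by
                by_contra h0
                push_neg at h0
                have hk00 : k0 = 0 := by omega
                rw [hk00, PS_zero] at hlower
                omega
              have hkk : k0 - 1 + 1 = k0 := by omega
              have hIH := IH (k0-1) (by omega) b hb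
              rw [hkk] at hIH
              have hposb0 : spos a d k0 b = 0 := by rw [hposb]; omega
              rw [hposb0, if_pos ⟨⟨hb1, hb2⟩, by omega, by omega⟩]
              have hee : e - 0 = e := by omega
              rw [hee]
              exact hIH hlower hb1 e (by omega) (by omega)
            · -- fitted : its range lies strictly below e
              exfalso
              push_neg at hlower
              omega
        · rw [if_neg hcond]
      have EQ := KER k0 e hk0m he
      rw [Finset.sum_eq_single_of_mem c (Finset.mem_range.mpr hc) hothers] at EQ
      have hposc : spos a d k0 c = a (k0+1) - d (c+1) := by
        unfold spos; rw [if_neg (by omega)]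
      rw [hposc] at EQ
      rw [if_pos ⟨⟨by omega, by omega⟩, by omega, by omega⟩] at EQ
      have hee : e - (a (k0+1) - d (c+1)) = i := by omega
      rwa [hee] at EQ
    -- Phase 2 : low coefficients of crossers vanish (descending induction)
    have S2 : ∀ l k0 c, m - k0 ≤ l → c < n → PS d c < PS a (k0+1) → PS a (k0+1) < PS d (c+1) →
        ∀ i, i < PS d (c+1) - PS a (k0+1) → G c i = 0 := by
      intro l
      induction l with
      | zero =>
        intro k0 c hl hc h1 h2 i hi
        exfalso
        have hs1 : PS a (k0+1) = PS a m := PS_stable a ha_zero (by omega)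
        have hs2 : PS d (c+1) ≤ PS d n := PS_mono d (by omega)
        have := hDA hd_pos ha_zero hfam
        omega
      | succ l IHl =>
        intro k0 c hl hc h1 h2 i hi
        have hDc : PS d (c+1) = PS d c + d (c+1) := PS_succ d c
        have hA1 : PS a (k0+1) = PS a k0 + a (k0+1) := PS_succ a k0
        have hA2 : PS a (k0+1+1) = PS a (k0+1) + a (k0+1+1) := PS_succ a (k0+1)
        have hdj : d (c+1) ≤ a (k0+1+1) := dj_le_ak hd_mono hfam hc (by omega)
        have hk1m : k0 + 1 < m := by
          by_contra hcon
          push_neg at hcon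
          have hs1 : PS a (k0+1) = PS a m := PS_stable a ha_zero (by omega)
          have hs2 : PS d (c+1) ≤ PS d n := PS_mono d (by omega)
          have := hDA hd_pos ha_zero hfam
          omega
        have he : i < a (k0+1+1) := by omega
        have hothers : ∀ b ∈ Finset.range n, b ≠ c →
            (if sact a d (k0+1) b ∧ spos a d (k0+1) b ≤ i ∧ i < spos a d (k0+1) b + d (b+1)
              then G b (i - spos a d (k0+1) b) else 0) = 0 := by
          intro b hb hbc
          rw [Finset.mem_range] at hb
          by_cases hcond : sact a d (k0+1) b ∧ spos a d (k0+1) b ≤ i ∧ i < spos a d (k0+1) b + d (b+1)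
          · obtain ⟨⟨hb1, hb2⟩, hr1, hr2⟩ := hcond
            have hDb : PS d (b+1) = PS d b + d (b+1) := PS_succ d b
            by_cases hup : PS a (k0+1+1) < PS d (b+1)
            · -- upper-crosser of the lower row : descending IH
              have hdb : d (b+1) ≤ a (k0+1+1) := dj_le_ak hd_mono hfam hb (by omega)
              have hposb : spos a d (k0+1) b = a (k0+1+1) - d (b+1) := by
                unfold spos; rw [if_neg (by omega)]
              have hbc' : c < b := by
                rcases Nat.lt_or_ge c b with h' | h'
                · exact h'
                · exfalso
                  have hmono2 : PS a (k0+1) ≤ PS a (k0+1+1) := PS_mono a (by omega)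
                  have : PS d (b+1) ≤ PS d c := PS_mono d (by omega)
                  omega
              have hDcb : PS d (c+1) ≤ PS d b := PS_mono d (by omega)
              rw [hposb] at hr1 hr2
              rw [hposb, if_pos ⟨⟨hb1, hb2⟩, hr1, hr2⟩]
              exact IHl (k0+1) b (by omega) hb hb2 hup _ (by omega)
            · push_neg at hup
              exfalso
              by_cases hlow : PS a (k0+1) ≤ PS d b
              · -- fitted : starts past i
                have hposb : spos a d (k0+1) b = PS d b - PS a (k0+1) := by
                  unfold spos; rw [if_pos hup]
                rw [hposb] at hr1
                have hbc' : c + 1 ≤ b := by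
                  rcases Nat.lt_or_ge c b with h' | h'
                  · omega
                  · exfalso
                    have : PS d b ≤ PS d c := PS_mono d h'
                    omega
                have : PS d (c+1) ≤ PS d b := PS_mono d hbc'
                omega
              · -- second lower-crosser : impossible
                push_neg at hlow
                rcases Nat.lt_or_ge b c with h' | h'
                · have : PS d (b+1) ≤ PS d c := PS_mono d (by omega)
                  omega
                · have hgt' : c < b := by omega
                  have : PS d (c+1) ≤ PS d b := PS_mono d (by omega)
                  omega
          · rw [if_neg hcond]
        have EQ := KER (k0+1) i hk1m he
        rw [Finset.sum_eq_single_of_mem c (Finset.mem_range.mpr hc) hothers] at EQ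
        have hDcA : PS d (c+1) ≤ PS a (k0+1+1) := by omega
        have hposc : spos a d (k0+1) c = 0 := by
          unfold spos
          rw [if_pos hDcA]
          omega
        rw [hposc] at EQ
        have hmono3 : PS a (k0+1) ≤ PS a (k0+1+1) := PS_mono a (by omega)
        rw [if_pos ⟨⟨by omega, by omega⟩, by omega, by omega⟩] at EQ
        have hee : i - 0 = i := by omega
        rwa [hee] at EQ
    -- Phase 3 : fitted columns vanish
    have S3 : ∀ k0 c, c < n → PS a k0 ≤ PS d c → PS d (c+1) ≤ PS a (k0+1) →
        ∀ i, i < d (c+1) → G c i = 0 := by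
      intro k0 c hc hf1 hf2 i hi
      have hDc : PS d (c+1) = PS d c + d (c+1) := PS_succ d c
      have hdc1 : 1 ≤ d (c+1) := hd_pos (c+1) (by omega) (by omega)
      have hA1 : PS a (k0+1) = PS a k0 + a (k0+1) := PS_succ a k0
      have hk0m : k0 < m := by
        by_contra hcon
        push_neg at hcon
        have hs0 : PS a k0 = PS a m := PS_stable a ha_zero (by omega)
        have hs1 : PS a (k0+1) = PS a m := PS_stable a ha_zero (by omega)
        omega
      set e := (PS d c - PS a k0) + i with he_def
      have he : e < a (k0+1) := by omega
      have hothers : ∀ b ∈ Finset.range n, b ≠ c →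
          (if sact a d k0 b ∧ spos a d k0 b ≤ e ∧ e < spos a d k0 b + d (b+1)
            then G b (e - spos a d k0 b) else 0) = 0 := by
        intro b hb hbc
        rw [Finset.mem_range] at hb
        by_cases hcond : sact a d k0 b ∧ spos a d k0 b ≤ e ∧ e < spos a d k0 b + d (b+1)
        · obtain ⟨⟨hb1, hb2⟩, hr1, hr2⟩ := hcond
          have hDb : PS d (b+1) = PS d b + d (b+1) := PS_succ d b
          by_cases hup : PS a (k0+1) < PS d (b+1)
          · -- upper-crosser of this row : phase 2 applies to its low part
            have hdb : d (b+1) ≤ a (k0+1) := dj_le_ak hd_mono hfam hb (by omega)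
            have hposb : spos a d k0 b = a (k0+1) - d (b+1) := by
              unfold spos; rw [if_neg (by omega)]
            have hbc' : c < b := by
              rcases Nat.lt_or_ge c b with h' | h'
              · exact h'
              · exfalso
                have : PS d (b+1) ≤ PS d (c+1) := PS_mono d (by omega)
                omega
            have hDcb : PS d (c+1) ≤ PS d b := PS_mono d (by omega)
            rw [hposb] at hr1 hr2
            rw [hposb, if_pos ⟨⟨hb1, hb2⟩, hr1, hr2⟩]
            exact S2 (m - k0) k0 b le_rfl hb hb2 hup _ (by omega)
          · push_neg at hup
            by_cases hlow : PS a k0 ≤ PS d b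
            · -- another fitted column : disjoint ranges
              exfalso
              have hposb : spos a d k0 b = PS d b - PS a k0 := by
                unfold spos; rw [if_pos hup]
              rw [hposb] at hr1 hr2
              rcases Nat.lt_or_ge b c with h' | h'
              · have : PS d (b+1) ≤ PS d c := PS_mono d (by omega)
                omega
              · have hbb : c < b := by omega
                have : PS d (c+1) ≤ PS d b := PS_mono d (by omega)
                omega
            · -- lower-crosser : phase 1 applies to its top part
              push_neg at hlow
              have hk01 : 1 ≤ k0 := by
                by_contra h0
                push_neg at h0
                have hk00 : k0 = 0 := by omega
                rw [hk00, PS_zero] at hlow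
                omega
              have hposb : spos a d k0 b = 0 := by
                unfold spos; rw [if_pos hup]; omega
              rw [hposb] at hr1 hr2
              have hbc' : b < c := by
                rcases Nat.lt_or_ge b c with h' | h'
                · exact h'
                · exfalso
                  have : PS d c ≤ PS d b := PS_mono d h'
                  omega
              have hb1c : PS d (b+1) ≤ PS d c := PS_mono d (by omega)
              have hkk : k0 - 1 + 1 = k0 := by omega
              have hS1b := S1 (k0-1) b hb
              rw [hkk] at hS1b
              rw [hposb, if_pos ⟨⟨hb1, hb2⟩, hr1, hr2⟩]
              have hee : e - 0 = e := by omega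
              rw [hee]
              exact hS1b hlow hb1 e (by omega) (by omega)
        · rw [if_neg hcond]
      have EQ := KER k0 e hk0m he
      rw [Finset.sum_eq_single_of_mem c (Finset.mem_range.mpr hc) hothers] at EQ
      have hposc : spos a d k0 c = PS d c - PS a k0 := by
        unfold spos; rw [if_pos hf2]
      rw [hposc] at EQ
      rw [if_pos ⟨⟨by omega, by omega⟩, by omega, by omega⟩] at EQ
      have hee : e - (PS d c - PS a k0) = i := by omega
      rwa [hee] at EQ
    -- conclusion : every coefficient vanishes
    funext y
    have hy1 : y.1.1 < n := y.1.2
    have hy2 : (y.2:ℕ) < d (y.1.1+1) := y.2.2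
    have hGy : G y.1.1 (y.2:ℕ) = v y := hGdef y.1 y.2
    rw [Pi.zero_apply, ← hGy]
    set c := y.1.1 with hcdef
    have hDcs : PS d (c+1) = PS d c + d (c+1) := PS_succ d c
    have hdc1 : 1 ≤ d (c+1) := hd_pos (c+1) (by omega) (by omega)
    have hDCn : PS d (c+1) ≤ PS d n := PS_mono d (by omega)
    have hDAm := hDA hd_pos ha_zero hfam
    have hm1 : 1 ≤ m := by
      by_contra h0
      push_neg at h0
      have hm0 : m = 0 := by omega
      rw [hm0, PS_zero] at hDAm
      have h2 : 1 ≤ PS d n := PS_pos d (by omega) (hd_pos 1 (by omega) (by omega))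
      omega
    have hex : ∃ k', PS d c < PS a (k'+1) := by
      refine ⟨m - 1, ?_⟩
      have hkk : m - 1 + 1 = m := by omega
      rw [hkk]
      omega
    have hfound : PS d c < PS a (Nat.find hex + 1) := Nat.find_spec hex
    have hmin : PS a (Nat.find hex) ≤ PS d c := by
      rcases Nat.eq_zero_or_pos (Nat.find hex) with h0 | h0
      · rw [h0, PS_zero]; omega
      · have hh := Nat.find_min hex (show Nat.find hex - 1 < Nat.find hex by omega)
        push_neg at hh
        have hkk : Nat.find hex - 1 + 1 = Nat.find hex := by omega
        rw [hkk] at hh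
        exact hh
    by_cases hcross : PS d (c+1) ≤ PS a (Nat.find hex + 1)
    · exact S3 (Nat.find hex) c hy1 hmin hcross (y.2:ℕ) hy2
    · push_neg at hcross
      by_cases hio : PS d (c+1) - PS a (Nat.find hex + 1) ≤ (y.2:ℕ)
      · exact S1 (Nat.find hex) c hy1 hfound hcross (y.2:ℕ) hy2 hio
      · push_neg at hio
        exact S2 (m - Nat.find hex) (Nat.find hex) c le_rfl hy1 hfound hcross (y.2:ℕ) hio
  intro v w hvw
  have := key (v - w) (by rw [map_sub, hvw, sub_self])
  exact sub_eq_zero.mp this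

end Snake

end KSub


/-- Theorem 6: numerical criterion for the preprojective Kronecker
representation `N^P = ⊕ⱼ Q_{d j}` to be a subrepresentation of `M^P = ⊕ᵢ Q_{a i}`,
in terms of the indices `r l`, `s l`, `t` defined from the Kronecker invariants. -/
theorem preprojective_subrep_iff (K : Type*) [Field K] [IsAlgClosed K]
    (m n : ℕ) (a d : ℕ → ℕ)
    (ha_pos : ∀ j, 1 ≤ j → j ≤ m → 1 ≤ a j)
    (ha_mono : ∀ i j, 1 ≤ i → i ≤ j → j ≤ m → a j ≤ a i)
    (ha_zero : ∀ j, m < j → a j = 0)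
    (hd_pos : ∀ j, 1 ≤ j → j ≤ n → 1 ≤ d j)
    (hd_mono : ∀ i j, 1 ≤ i → i ≤ j → j ≤ n → d j ≤ d i)
    (hd_zero : ∀ j, n < j → d j = 0)
    (r s : ℕ → ℕ) (hs0 : s 0 = 0)
    (hr : ∀ l, 1 ≤ l → r l =
      ((Finset.Icc 1 n).filter (fun j => a (s (l - 1) + 1) < d j)).sup id)
    (hs : ∀ l, 1 ≤ l → s l =
      ((Finset.Icc 1 m).filter (fun i => d (r l + 1) ≤ a i)).sup id)
    (t : ℕ) (ht1 : 1 ≤ t) (htr : r t = n) (htmin : ∀ l, 1 ≤ l → l < t → r l ≠ n) :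
    (∃ (ψ : Matrix (Σ i : Fin m, Fin (a (i.1 + 1))) (Σ j : Fin n, Fin (d (j.1 + 1))) K)
       (φ : Matrix (Σ i : Fin m, Fin (a (i.1 + 1) - 1)) (Σ j : Fin n, Fin (d (j.1 + 1) - 1)) K),
        Function.Injective ψ.mulVecLin ∧ Function.Injective φ.mulVecLin ∧
        QsumA K m a * φ = ψ * QsumA K n d ∧ QsumB K m a * φ = ψ * QsumB K n d) ↔
    (r 1 = 0 ∧ ∀ i, 1 ≤ i → i ≤ t - 1 →
      (∑ j ∈ Finset.Icc 1 (r (i + 1)), d j ≤ ∑ j ∈ Finset.Icc 1 (s i), a j) ∧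
      (∑ j ∈ Finset.Icc 1 (r (i + 1)), (d j - 1) ≤ ∑ j ∈ Finset.Icc 1 (s i), (a j - 1))) := by
  classical
  have ha_anti : ∀ i j, 1 ≤ i → i ≤ j → a j ≤ a i := by
    intro i j h1 h2
    by_cases hj : j ≤ m
    · exact ha_mono i j h1 h2 hj
    · rw [ha_zero j (by omega)]; exact Nat.zero_le _
  have hrpre : ∀ l, 1 ≤ l → ∀ j, 1 ≤ j → j ≤ r l → a (s (l-1) + 1) < d j := by
    intro l hl j h1 h2
    rw [hr l hl] at h2
    exact KSub.prefix_of_sup (fun j => a (s (l-1)+1) < d j)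
      (fun i j' hi hij hj' hPj' => by
        have := hd_mono i j' hi hij hj'
        omega) j h1 h2
  have hrn : ∀ l, 1 ≤ l → r l ≤ n := by
    intro l hl
    rw [hr l hl]
    apply KSub.sup_le_of_mem_le
    intro x h1 h2 _
    exact h2
  have hsm : ∀ l, 1 ≤ l → s l ≤ m := by
    intro l hl
    rw [hs l hl]
    apply KSub.sup_le_of_mem_le
    intro x h1 h2 _
    exact h2
  constructor
  · rintro ⟨ψ, φ, hψ, hφ, hA, hB⟩
    constructor
    · by_contra hr10
      have hr11 : 1 ≤ r 1 := by omega
      have hrn1 := hrn 1 (by omega)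
      have hbig : ∀ k j, 0 < k → k ≤ m → 1 ≤ j → j ≤ r 1 → a k < d j := by
        intro k j hk1 hk2 hj1 hj2
        have hPj := hrpre 1 (by omega) j hj1 hj2
        rw [show (1:ℕ) - 1 = 0 from rfl, hs0] at hPj
        have : a k ≤ a (0+1) := ha_anti (0+1) k (by omega) (by omega)
        omega
      have hN := (KSub.necessity ψ φ hψ hφ hA hB 0 (r 1) (by omega) hrn1 hbig).1
      rw [KSub.PS_zero a] at hN
      have : 1 ≤ KSub.PS d (r 1) := KSub.PS_pos d hr11 (hd_pos 1 (by omega) (by omega))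
      omega
    · intro i hi1 hit
      have hq := hrn (i+1) (by omega)
      have hp := hsm i hi1
      have hbig : ∀ k j, s i < k → k ≤ m → 1 ≤ j → j ≤ r (i+1) → a k < d j := by
        intro k j hk1 hk2 hj1 hj2
        have hPj := hrpre (i+1) (by omega) j hj1 hj2
        simp only [Nat.add_sub_cancel] at hPj
        have : a k ≤ a (s i + 1) := ha_anti (s i + 1) k (by omega) (by omega)
        omega
      have hN := KSub.necessity ψ φ hψ hφ hA hB (s i) (r (i+1)) hp hq hbig
      exact ⟨hN.1, hN.2⟩
  · rintro ⟨hr1, hcond⟩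
    have hfam : KSub.Fam1 m n a d := by
      intro p q0 hq0 hbig
      rcases Nat.eq_zero_or_pos q0 with h0 | h0
      · rw [h0, KSub.PS_zero d]
        exact Nat.zero_le _
      · have hwit : q0 ≤ r (t - 1 + 1) := by
          rw [Nat.sub_add_cancel ht1, htr]; exact hq0
        have hex : ∃ i, q0 ≤ r (i+1) := ⟨t-1, hwit⟩
        have hfind : q0 ≤ r (Nat.find hex + 1) := Nat.find_spec hex
        have hi0t : Nat.find hex ≤ t - 1 := Nat.find_min' hex hwit
        have hi01 : 1 ≤ Nat.find hex := by
          by_contra h0'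
          push_neg at h0'
          have hz : Nat.find hex = 0 := by omega
          have : q0 ≤ r 1 := by simpa [hz] using hfind
          omega
        have hri0 : r (Nat.find hex) < q0 := by
          have hmin := Nat.find_min hex (show Nat.find hex - 1 < Nat.find hex by omega)
          push_neg at hmin
          rwa [Nat.sub_add_cancel hi01] at hmin
        have hsip : s (Nat.find hex) ≤ p := by
          rw [hs (Nat.find hex) hi01]
          apply KSub.sup_le_of_mem_le
          intro k h1 h2 hPk
          by_contra hkp
          push_neg at hkp
          have hj := hbig (r (Nat.find hex) + 1) (by omega) (by omega)
          have h3 : a k ≤ a (p+1) := ha_anti (p+1) k (by omega) (by omega)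
          omega
        calc KSub.PS d q0 ≤ KSub.PS d (r (Nat.find hex + 1)) := KSub.PS_mono d hfind
          _ ≤ KSub.PS a (s (Nat.find hex)) := (hcond (Nat.find hex) hi01 hi0t).1
          _ ≤ KSub.PS a p := KSub.PS_mono a hsip
    have hψinj := KSub.spsi_inj (K := K) hd_pos hd_mono ha_zero hfam
    have hAeq := KSub.snakeA (K := K) hd_mono hfam
    have hBeq := KSub.snakeB (K := K) hd_mono hfam
    have hAinj := KSub.QA_inj (K := K) n d
    refine ⟨KSub.spsi K m n a d, KSub.sphi K m n a d, hψinj, ?_, hAeq, hBeq⟩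
    have key : ∀ v, (KSub.sphi K m n a d).mulVecLin v = 0 → v = 0 := by
      intro v hv0
      have h2 : (KSub.sphi K m n a d).mulVec v = 0 := by
        rw [← Matrix.mulVecLin_apply]; exact hv0
      have h1 : (QsumA K m a).mulVec ((KSub.sphi K m n a d).mulVec v)
          = (KSub.spsi K m n a d).mulVec ((QsumA K n d).mulVec v) := by
        rw [Matrix.mulVec_mulVec, Matrix.mulVec_mulVec, hAeq]
      have h3 : (KSub.spsi K m n a d).mulVecLin ((QsumA K n d).mulVec v) = 0 := by
        rw [Matrix.mulVecLin_apply, ← h1, h2, Matrix.mulVec_zero]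
      have h4 : (QsumA K n d).mulVec v = 0 :=
        hψinj (h3.trans (map_zero _).symm)
      exact hAinj (show (QsumA K n d).mulVecLin v = (QsumA K n d).mulVecLin 0 by
        rw [map_zero, Matrix.mulVecLin_apply, h4])
    intro v w hvw
    have := key (v - w) (by rw [map_sub, hvw, sub_self])
    exact sub_eq_zero.mp this
end
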